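/- arXiv:2211.14848 — 3 statements merged into one kernel-verified Lean document; each statement's English description precedes it below -/
import Mathlib

section
/- Let m, n ≥ 1 and let M ∈ ℝ^{m×n} with rank(M) ≤ 1. Define f : ℝ^m × ℝ^n → ℝ by f(x,y) = Σ_{i=1}^m Σ_{j=1}^n |x_i y_j − M_{ij}|. Then every local minimum of f is a global minimum if and only if either every entry of M is equal to zero or every entry of M is nonzero. -/
open scoped Classical

open Filter Topology

section NoSpuriousAux

variable {m n : ℕ}
set_option maxHeartbeats 1000000
def FF (a : Fin m → ℝ) (b : Fin n → ℝ) : (Fin m → ℝ) × (Fin n → ℝ) → ℝ :=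
  fun q => ∑ i, ∑ j, |q.1 i * q.2 j - a i * b j|

lemma descend {E : Type*} [TopologicalSpace E] {f : E → ℝ} {p : E} (γ : ℝ → E)
    (hc : Tendsto γ (nhdsWithin (0:ℝ) (Set.Ioi 0)) (nhds p))
    (hlt : ∀ᶠ ε in nhdsWithin (0:ℝ) (Set.Ioi 0), f (γ ε) < f p)
    (h : IsLocalMin f p) : False := by
  have h2 : ∀ᶠ ε in nhdsWithin (0:ℝ) (Set.Ioi 0), f p ≤ f (γ ε) := hc.eventually h
  obtain ⟨ε, h3, h4⟩ := (h2.and hlt).exists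
  exact absurd h3 (not_le.2 h4)

lemma localmin_comp {α β : Type*} [TopologicalSpace α] [TopologicalSpace β]
    {f : α → ℝ} {p : α} (h : IsLocalMin f p) {φ : β → α} {q : β}
    (hφ : ContinuousAt φ q) (hq : φ q = p) : IsLocalMin (fun z => f (φ z)) q := by
  have ht := hφ.tendsto
  rw [hq] at ht
  exact (ht.eventually h).mono fun z hz => by simpa [hq] using hz

lemma ioo_eventually {δ : ℝ} (hδ : 0 < δ) :
    ∀ᶠ ε in nhdsWithin (0:ℝ) (Set.Ioi 0), ε ∈ Set.Ioo 0 δ :=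
  Ioo_mem_nhdsGT_of_mem (by simp [hδ])

lemma localmin_swap {a : Fin m → ℝ} {b : Fin n → ℝ} {x : Fin m → ℝ} {y : Fin n → ℝ}
    (h : IsLocalMin (FF a b) (x, y)) : IsLocalMin (FF b a) (y, x) := by
  have h2 := localmin_comp (φ := fun z : (Fin n → ℝ) × (Fin m → ℝ) => (z.2, z.1))
    (q := (y, x)) h (Continuous.continuousAt (by fun_prop)) rfl
  have : (fun z : (Fin n → ℝ) × (Fin m → ℝ) => FF a b (z.2, z.1)) = FF b a := by
    funext z
    simp only [FF]
    rw [Finset.sum_comm]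
    congr 1; funext j; congr 1; funext i; rw [mul_comm (z.1 j) (z.2 i), mul_comm (b j) (a i)]
  rwa [this] at h2

lemma localmin_flip {a : Fin m → ℝ} {b : Fin n → ℝ} {x : Fin m → ℝ} {y : Fin n → ℝ}
    (h : IsLocalMin (FF a b) (x, y)) : IsLocalMin (FF a b) (-x, -y) := by
  have h2 := localmin_comp (φ := fun z : (Fin m → ℝ) × (Fin n → ℝ) => (-z.1, -z.2))
    (q := (-x, -y)) h (Continuous.continuousAt (by fun_prop)) (by simp)
  have : (fun z : (Fin m → ℝ) × (Fin n → ℝ) => FF a b (-z.1, -z.2)) = FF a b := by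
    funext z
    simp only [FF]
    congr 1; funext i; congr 1; funext j
    simp only [Pi.neg_apply]; ring_nf
  rwa [this] at h2

lemma rank_le_one_outer {m n : ℕ} (M : Matrix (Fin m) (Fin n) ℝ) (h : M.rank ≤ 1) :
    ∃ (u : Fin m → ℝ) (v : Fin n → ℝ), ∀ i j, M i j = u i * v j := by
  have h1 : Module.finrank ℝ (LinearMap.range M.mulVecLin) ≤ 1 := h
  rw [finrank_le_one_iff] at h1
  obtain ⟨⟨u, hu⟩, hspan⟩ := h1
  have key : ∀ j : Fin n, ∃ c : ℝ, ∀ i, M i j = u i * c := by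
    intro j
    have hmem : M.mulVec (Pi.single j 1) ∈ LinearMap.range M.mulVecLin :=
      ⟨Pi.single j 1, rfl⟩
    obtain ⟨c, hc⟩ := hspan ⟨M.mulVec (Pi.single j 1), hmem⟩
    refine ⟨c, fun i => ?_⟩
    have h2 : c • u = M.mulVec (Pi.single j 1) := congrArg Subtype.val hc
    have h3 := congrFun h2 i
    simp [Matrix.mulVec_single] at h3
    rw [← h3]; ring
  choose v hv using key
  exact ⟨u, v, fun i j => hv j i⟩

lemma tendsto_zero_right {g : ℝ → ℝ} (hg : Continuous g) :
    Tendsto g (nhdsWithin (0:ℝ) (Set.Ioi 0)) (nhds (g 0)) :=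
  (hg.tendsto 0).mono_left nhdsWithin_le_nhds

/-- L1 : `(x, 0)` is never a local min (for positive a,b). -/
lemma L1 {a : Fin m → ℝ} {b : Fin n → ℝ} (ha : ∀ i, 0 < a i) (hb : ∀ j, 0 < b j)
    (hm : 0 < m) (hn : 0 < n) {x : Fin m → ℝ}
    (h : IsLocalMin (FF a b) (x, 0)) : False := by
  set s : ℝ := if (∑ i, x i) < 0 then -1 else 1 with hs
  have hs2 : s * s = 1 := by by_cases hc : (∑ i, x i) < 0 <;> simp [hs, hc]
  have hsx : 0 ≤ s * (∑ i, x i) := by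
    by_cases hc : (∑ i, x i) < 0
    · simp only [hs, if_pos hc]; nlinarith
    · simp only [hs, if_neg hc]; nlinarith [not_lt.1 hc]
  set γ : ℝ → (Fin m → ℝ) × (Fin n → ℝ) :=
    fun ε => (fun i => x i + ε * s, fun _ => ε * s) with hγ
  apply descend γ ?_ ?_ h
  · have hcont : Continuous γ := by
      apply Continuous.prodMk <;> exact continuous_pi (fun _ => by fun_prop)
    have h0 : γ 0 = (x, 0) := by
      simp only [hγ]
      exact Prod.ext (by funext i; simp) (by funext j; simp)
    rw [← h0]
    exact (hcont.tendsto 0).mono_left nhdsWithin_le_nhds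
  · have hev : ∀ᶠ ε in nhdsWithin (0:ℝ) (Set.Ioi 0),
        ∀ i j, (x i + ε * s) * (ε * s) < a i * b j := by
      rw [eventually_all]; intro i
      rw [eventually_all]; intro j
      have ht := tendsto_zero_right (g := fun ε : ℝ => (x i + ε * s) * (ε * s)) (by fun_prop)
      simp only [zero_mul, mul_zero] at ht
      exact ht.eventually (eventually_lt_nhds (mul_pos (ha i) (hb j)))
    filter_upwards [hev, ioo_eventually one_pos] with ε hev hε
    obtain ⟨hε0, hε1⟩ := hε
    have key : ∀ i j, |(γ ε).1 i * (γ ε).2 j - a i * b j|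
        = a i * b j - (x i * (ε * s) + ε^2) := by
      intro i j
      have hh := hev i j
      simp only [hγ]
      rw [abs_of_neg (by linarith)]
      have h3 : (x i + ε * s) * (ε * s) = x i * (ε * s) + ε^2 := by nlinarith [hs2]
      linarith
    have hFF0 : FF a b (x, (0 : Fin n → ℝ)) = ∑ i, ∑ j, a i * b j := by
      simp only [FF]
      refine Finset.sum_congr rfl fun i _ => Finset.sum_congr rfl fun j _ => ?_
      simp [abs_of_pos (mul_pos (ha i) (hb j))]
    have hFF : FF a b (γ ε) = (∑ i, ∑ j, a i * b j)
        - (n:ℝ) * ((∑ i, x i) * (ε * s) + (m:ℝ) * ε^2) := by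
      simp only [FF]
      have inner : ∀ i, ∑ j, |(γ ε).1 i * (γ ε).2 j - a i * b j|
          = (∑ j, a i * b j) - (n:ℝ) * (x i * (ε * s) + ε^2) := by
        intro i
        rw [Finset.sum_congr rfl fun j _ => key i j, Finset.sum_sub_distrib,
          Finset.sum_const, Finset.card_univ, Fintype.card_fin, nsmul_eq_mul]
      rw [Finset.sum_congr rfl fun i _ => inner i, Finset.sum_sub_distrib]
      congr 1
      rw [← Finset.mul_sum, Finset.sum_add_distrib, Finset.sum_const, Finset.card_univ,
        Fintype.card_fin, ← Finset.sum_mul, nsmul_eq_mul]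
    rw [hFF, hFF0]
    have hm1 : (1:ℝ) ≤ (m:ℝ) := by exact_mod_cast hm
    have hn1 : (1:ℝ) ≤ (n:ℝ) := by exact_mod_cast hn
    have h5 : 0 ≤ (∑ i, x i) * (ε * s) := by nlinarith
    have h6 : 0 < (m:ℝ) * ε^2 := by positivity
    have h7 : 0 < (n:ℝ) * ((∑ i, x i) * (ε * s) + (m:ℝ) * ε^2) := by nlinarith
    linarith

/-- L5 : zero coordinate with nonzero column/row sum. -/
lemma L5 {a : Fin m → ℝ} {b : Fin n → ℝ} (ha : ∀ i, 0 < a i) (hb : ∀ j, 0 < b j)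
    {x : Fin m → ℝ} {y : Fin n → ℝ} {i0 : Fin m} (hx0 : x i0 = 0)
    (hsum : (∑ j, y j) ≠ 0) (h : IsLocalMin (FF a b) (x, y)) : False := by
  set s : ℝ := if (∑ j, y j) < 0 then -1 else 1 with hs
  have hsy : 0 < s * (∑ j, y j) := by
    rcases lt_or_gt_of_ne hsum with hc | hc
    · simp only [hs, if_pos hc]; nlinarith
    · simp only [hs, if_neg (not_lt.2 hc.le)]; nlinarith
  set γ : ℝ → (Fin m → ℝ) × (Fin n → ℝ) :=
    fun ε => (fun i => if i = i0 then ε * s else x i, y) with hγ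
  apply descend γ ?_ ?_ h
  · have hcont : Continuous γ := by
      refine Continuous.prodMk (continuous_pi fun i => ?_) continuous_const
      by_cases hi : i = i0 <;> simp [hi] <;> fun_prop
    have h0 : γ 0 = (x, y) := by
      simp only [hγ]
      refine Prod.ext ?_ rfl
      funext i; by_cases hi : i = i0 <;> simp [hi, hx0]
    rw [← h0]
    exact (hcont.tendsto 0).mono_left nhdsWithin_le_nhds
  · have hev : ∀ᶠ ε in nhdsWithin (0:ℝ) (Set.Ioi 0),
        ∀ j, (ε * s) * y j < a i0 * b j := by
      rw [eventually_all]; intro j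
      have ht := tendsto_zero_right (g := fun ε : ℝ => (ε * s) * y j) (by fun_prop)
      simp only [zero_mul] at ht
      exact ht.eventually (eventually_lt_nhds (mul_pos (ha i0) (hb j)))
    filter_upwards [hev, ioo_eventually one_pos] with ε hev hε
    obtain ⟨hε0, hε1⟩ := hε
    have key : ∀ i, (∑ j, |(γ ε).1 i * y j - a i * b j|)
        = (∑ j, |x i * y j - a i * b j|) + (if i = i0 then -(ε * s * ∑ j, y j) else 0) := by
      intro i
      by_cases hi : i = i0
      · subst hi
        rw [if_pos rfl]
        have hterm : ∀ j, |(γ ε).1 i * y j - a i * b j| = a i * b j - ε * s * y j := by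
          intro j
          simp only [hγ, eq_self_iff_true, if_true]
          rw [abs_of_neg (by linarith [hev j])]
          ring
        have hterm0 : ∀ j, |x i * y j - a i * b j| = a i * b j := by
          intro j; rw [hx0]; simp [abs_of_pos (mul_pos (ha i) (hb j))]
        rw [Finset.sum_congr rfl fun j _ => hterm j,
          Finset.sum_congr rfl fun j _ => hterm0 j, Finset.sum_sub_distrib, ← Finset.mul_sum,
          ← Finset.mul_sum]
        ring
      · simp only [hγ, if_neg hi]
        ring_nf
    have hFF : FF a b (γ ε) = FF a b (x, y) - ε * (s * ∑ j, y j) := by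
      simp only [FF]
      rw [Finset.sum_congr rfl fun i _ => key i, Finset.sum_add_distrib, Finset.sum_ite_eq'
        Finset.univ i0 (fun _ => -(ε * s * ∑ j, y j))]
      simp only [Finset.mem_univ, if_pos]
      ring
    rw [hFF]
    nlinarith

/-- L2 : if all `x i ≥ 0`, some `x i0 > 0` and some `y j0 < 0`, not a local min. -/
lemma L2 {a : Fin m → ℝ} {b : Fin n → ℝ} (ha : ∀ i, 0 < a i) (hb : ∀ j, 0 < b j)
    {x : Fin m → ℝ} {y : Fin n → ℝ} (hx : ∀ i, 0 ≤ x i)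
    {i0 : Fin m} (hxi0 : 0 < x i0) {j0 : Fin n} (hyj0 : y j0 < 0)
    (h : IsLocalMin (FF a b) (x, y)) : False := by
  set γ : ℝ → (Fin m → ℝ) × (Fin n → ℝ) :=
    fun ε => (x, fun j => if y j < 0 then (1 - ε) * y j else y j) with hγ
  apply descend γ ?_ ?_ h
  · have hcont : Continuous γ := by
      apply Continuous.prodMk continuous_const
      apply continuous_pi
      intro j
      by_cases hj : y j < 0 <;> simp [hj] <;> fun_prop
    have h0 : γ 0 = (x, y) := by
      simp only [hγ]
      refine Prod.ext rfl ?_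
      funext j; by_cases hj : y j < 0 <;> simp [hj]
    rw [← h0]
    exact (hcont.tendsto 0).mono_left nhdsWithin_le_nhds
  · filter_upwards [ioo_eventually one_pos] with ε hε
    obtain ⟨hε0, hε1⟩ := hε
    have key : ∀ i j, |(γ ε).1 i * (γ ε).2 j - a i * b j|
        = |x i * y j - a i * b j| + ε * (if y j < 0 then x i * y j else 0) := by
      intro i j
      by_cases hj : y j < 0
      · simp only [hγ, hj, if_pos]
        have hxy : x i * y j ≤ 0 := mul_nonpos_iff.2 (Or.inl ⟨hx i, hj.le⟩)
        have hab : 0 < a i * b j := mul_pos (ha i) (hb j)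
        have hxy2 : x i * ((1-ε)*y j) ≤ 0 :=
          mul_nonpos_iff.2 (Or.inl ⟨hx i, by nlinarith⟩)
        rw [abs_of_neg (by nlinarith), abs_of_neg (by nlinarith)]
        ring
      · simp only [hγ, hj, if_neg, if_false]
        ring_nf
    have hFF : FF a b (γ ε) = FF a b (x, y)
        + ε * (∑ i, ∑ j, if y j < 0 then x i * y j else 0) := by
      simp only [FF]
      rw [Finset.mul_sum, ← Finset.sum_add_distrib]
      refine Finset.sum_congr rfl fun i _ => ?_
      rw [Finset.mul_sum, ← Finset.sum_add_distrib]
      exact Finset.sum_congr rfl fun j _ => key i j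
    rw [hFF]
    have hneg : (∑ i, ∑ j, if y j < 0 then x i * y j else 0) < 0 := by
      have hterm : ∀ i, (∑ j, if y j < 0 then x i * y j else 0) ≤ 0 := by
        intro i
        apply Finset.sum_nonpos
        intro j _
        by_cases hj : y j < 0
        · simp only [hj, if_pos]
          exact mul_nonpos_iff.2 (Or.inl ⟨hx i, hj.le⟩)
        · simp [hj]
      have hi0 : (∑ j, if y j < 0 then x i0 * y j else 0) < 0 := by
        have := Finset.sum_lt_sum (s := Finset.univ)
          (f := fun j => if y j < 0 then x i0 * y j else 0) (g := fun _ => (0:ℝ))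
          (fun j _ => by
            by_cases hj : y j < 0
            · simp only [hj, if_pos]; exact mul_nonpos_iff.2 (Or.inl ⟨hx i0, hj.le⟩)
            · simp [hj])
          ⟨j0, Finset.mem_univ j0, by simp [hyj0]; nlinarith [hyj0, hxi0]⟩
        simpa using this
      have := Finset.sum_lt_sum (s := Finset.univ)
        (f := fun i => ∑ j, if y j < 0 then x i * y j else 0) (g := fun _ => (0:ℝ))
        (fun i _ => hterm i) ⟨i0, Finset.mem_univ i0, hi0⟩
      simpa using this
    nlinarith

lemma L3 {a : Fin m → ℝ} {b : Fin n → ℝ} (ha : ∀ i, 0 < a i) (hb : ∀ j, 0 < b j)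
    {x : Fin m → ℝ} {y : Fin n → ℝ}
    {i0 : Fin m} (hxi0 : 0 < x i0) {j0 : Fin n} (hyj0 : y j0 < 0)
    (hD : 2 * (∑ i, ∑ j, (if 0 < x i ∧ 0 < y j then
          (if x i * y j = a i * b j then x i * y j
            else if a i * b j < x i * y j then -(x i * y j) else x i * y j) else 0))
        + (∑ i, ∑ j, (if 0 < x i ∧ y j < 0 then x i * y j else 0))
        + (∑ i, ∑ j, (if x i < 0 ∧ 0 < y j then x i * y j else 0)) ≤ 0)
    (h : IsLocalMin (FF a b) (x, y)) : False := by
  set c1 : Fin m → Fin n → ℝ := fun i j => if 0 < x i ∧ 0 < y j then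
      (if x i * y j = a i * b j then x i * y j
        else if a i * b j < x i * y j then -(x i * y j) else x i * y j) else 0 with hc1
  set w1 : Fin m → Fin n → ℝ := fun i j => if 0 < x i ∧ y j < 0 then x i * y j else 0 with hw1
  set w2 : Fin m → Fin n → ℝ := fun i j => if x i < 0 ∧ 0 < y j then x i * y j else 0 with hw2
  set D1 := ∑ i, ∑ j, c1 i j with hD1
  set SW1 := ∑ i, ∑ j, w1 i j with hSW1
  set SW2 := ∑ i, ∑ j, w2 i j with hSW2
  have hw1le : ∀ i j, w1 i j ≤ 0 := by
    intro i j; simp only [hw1]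
    by_cases hc : 0 < x i ∧ y j < 0
    · simp only [hc, if_pos]; exact mul_nonpos_iff.2 (Or.inl ⟨hc.1.le, hc.2.le⟩)
    · simp [hc]
  have hw2le : ∀ i j, w2 i j ≤ 0 := by
    intro i j; simp only [hw2]
    by_cases hc : x i < 0 ∧ 0 < y j
    · simp only [hc, if_pos]; exact mul_nonpos_iff.2 (Or.inr ⟨hc.1.le, hc.2.le⟩)
    · simp [hc]
  have hSW1neg : SW1 < 0 := by
    have hrow : ∀ i, (∑ j, w1 i j) ≤ 0 := fun i => Finset.sum_nonpos fun j _ => hw1le i j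
    have hi0 : (∑ j, w1 i0 j) < 0 := by
      have := Finset.sum_lt_sum (s := Finset.univ) (f := fun j => w1 i0 j)
        (g := fun _ => (0:ℝ)) (fun j _ => hw1le i0 j)
        ⟨j0, Finset.mem_univ j0, by
          simp only [hw1, hxi0, hyj0, and_self, if_pos]
          nlinarith⟩
      simpa using this
    have := Finset.sum_lt_sum (s := Finset.univ) (f := fun i => ∑ j, w1 i j)
      (g := fun _ => (0:ℝ)) (fun i _ => hrow i) ⟨i0, Finset.mem_univ i0, hi0⟩
    simpa using this
  have hSW2le : SW2 ≤ 0 :=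
    Finset.sum_nonpos fun i _ => Finset.sum_nonpos fun j _ => hw2le i j
  set γ : ℝ → (Fin m → ℝ) × (Fin n → ℝ) := fun ε =>
    (fun i => if 0 < x i then (1-ε) * x i else x i,
     fun j => if 0 < y j then (1-ε) * y j else y j) with hγ
  apply descend γ ?_ ?_ h
  · have hcont : Continuous γ := by
      refine Continuous.prodMk (continuous_pi fun i => ?_) (continuous_pi fun j => ?_)
      · by_cases hc : 0 < x i <;> simp [hc] <;> fun_prop
      · by_cases hc : 0 < y j <;> simp [hc] <;> fun_prop
    have h0 : γ 0 = (x, y) := by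
      simp only [hγ]
      refine Prod.ext ?_ ?_
      · funext i; by_cases hc : 0 < x i <;> simp [hc]
      · funext j; by_cases hc : 0 < y j <;> simp [hc]
    rw [← h0]
    exact (hcont.tendsto 0).mono_left nhdsWithin_le_nhds
  · have hOK : ∀ᶠ ε in nhdsWithin (0:ℝ) (Set.Ioi 0), ∀ i j,
        (0 < x i ∧ 0 < y j ∧ a i * b j < x i * y j) →
          a i * b j < (1-ε)^2 * (x i * y j) := by
      rw [eventually_all]; intro i
      rw [eventually_all]; intro j
      by_cases hc : 0 < x i ∧ 0 < y j ∧ a i * b j < x i * y j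
      · have hcont2 : Continuous (fun ε : ℝ => (1-ε)^2 * (x i * y j)) := by fun_prop
        have ht : Tendsto (fun ε : ℝ => (1-ε)^2 * (x i * y j))
            (nhdsWithin (0:ℝ) (Set.Ioi 0)) (nhds (x i * y j)) := by
          have := (hcont2.tendsto 0).mono_left (nhdsWithin_le_nhds (s := Set.Ioi (0:ℝ)))
          simpa using this
        exact (ht.eventually (eventually_gt_nhds hc.2.2)).mono fun ε hε _ => hε
      · exact Filter.Eventually.of_forall fun ε hcc => absurd hcc hc
    have hmain : ∀ᶠ ε in nhdsWithin (0:ℝ) (Set.Ioi 0),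
        (2*D1 + SW1 + SW2) - ε * D1 < 0 := by
      rcases lt_or_eq_of_le hD with hlt | heq
      · have hδ : (0:ℝ) < (-(2*D1 + SW1 + SW2))/(|D1|+1) := by
          apply div_pos (by linarith) (by positivity)
        filter_upwards [ioo_eventually hδ] with ε hε
        obtain ⟨hε0, hε1⟩ := hε
        have h2 : ε * (|D1|+1) < -(2*D1 + SW1 + SW2) :=
          (lt_div_iff₀ (by positivity)).1 hε1
        nlinarith [le_abs_self D1, neg_abs_le D1, abs_nonneg D1]
      · have hD1pos : 0 < D1 := by nlinarith [hSW1neg, hSW2le]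
        filter_upwards [ioo_eventually one_pos] with ε hε
        obtain ⟨hε0, hε1⟩ := hε
        nlinarith
    filter_upwards [hOK, ioo_eventually one_pos, hmain] with ε hOK hε hmain
    obtain ⟨hε0, hε1⟩ := hε
    have key : ∀ i j, |(γ ε).1 i * (γ ε).2 j - a i * b j|
        = |x i * y j - a i * b j| + ((2*ε - ε^2) * c1 i j + ε * (w1 i j + w2 i j)) := by
      intro i j
      have hab : 0 < a i * b j := mul_pos (ha i) (hb j)
      by_cases hxi : 0 < x i <;> by_cases hyj : 0 < y j
      · have e1 : (γ ε).1 i = (1-ε) * x i := by simp [hγ, hxi]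
        have e2 : (γ ε).2 j = (1-ε) * y j := by simp [hγ, hyj]
        have ew1 : w1 i j = 0 := by simp [hw1, not_lt.2 hyj.le]
        have ew2 : w2 i j = 0 := by simp [hw2, not_lt.2 hxi.le]
        have hxy : 0 < x i * y j := mul_pos hxi hyj
        have hprod : ((1-ε) * x i) * ((1-ε) * y j) = (1-ε)^2 * (x i * y j) := by ring
        rw [e1, e2, ew1, ew2, hprod]
        by_cases hk : x i * y j = a i * b j
        · have ec1 : c1 i j = x i * y j := by simp [hc1, hxi, hyj, hk]
          rw [ec1, hk]
          have hle1 : (1-ε)^2 ≤ 1 := by nlinarith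
          rw [abs_of_nonpos (by nlinarith [mul_le_mul_of_nonneg_right hle1 hab.le]),
            sub_self, abs_zero]
          ring
        · by_cases hgt : a i * b j < x i * y j
          · have ec1 : c1 i j = -(x i * y j) := by simp [hc1, hxi, hyj, hk, hgt]
            rw [ec1]
            rw [abs_of_pos (by nlinarith [hOK i j ⟨hxi, hyj, hgt⟩]),
              abs_of_pos (by nlinarith)]
            ring
          · have hltxy : x i * y j < a i * b j := lt_of_le_of_ne (not_lt.1 hgt) hk
            have ec1 : c1 i j = x i * y j := by simp [hc1, hxi, hyj, hk, hgt]
            rw [ec1]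
            have hle1 : (1-ε)^2 ≤ 1 := by nlinarith
            have h9 : (1-ε)^2 * (x i * y j) ≤ x i * y j :=
              mul_le_of_le_one_left hxy.le hle1
            rw [abs_of_neg (by nlinarith), abs_of_neg (by nlinarith)]
            ring
      · -- x pos, y nonpos
        have e1 : (γ ε).1 i = (1-ε) * x i := by simp [hγ, hxi]
        have e2 : (γ ε).2 j = y j := by simp [hγ, hyj]
        have ec1 : c1 i j = 0 := by simp [hc1, hyj]
        have ew2 : w2 i j = 0 := by simp [hw2, not_lt.2 hxi.le]
        rw [e1, e2, ec1, ew2]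
        by_cases hyneg : y j < 0
        · have ew1 : w1 i j = x i * y j := by simp [hw1, hxi, hyneg]
          rw [ew1]
          have hxy : x i * y j < 0 := mul_neg_of_pos_of_neg hxi hyneg
          rw [abs_of_neg (by nlinarith), abs_of_neg (by nlinarith)]
          ring
        · have hy0 : y j = 0 := le_antisymm (not_lt.1 hyj) (not_lt.1 hyneg)
          have ew1 : w1 i j = 0 := by simp [hw1, hyneg]
          rw [ew1, hy0]
          ring_nf
      · -- x nonpos, y pos
        have e1 : (γ ε).1 i = x i := by simp [hγ, hxi]
        have e2 : (γ ε).2 j = (1-ε) * y j := by simp [hγ, hyj]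
        have ec1 : c1 i j = 0 := by simp [hc1, hxi]
        have ew1 : w1 i j = 0 := by simp [hw1, hxi]
        rw [e1, e2, ec1, ew1]
        by_cases hxneg : x i < 0
        · have ew2 : w2 i j = x i * y j := by simp [hw2, hxneg, hyj]
          rw [ew2]
          have hxy : x i * y j < 0 := mul_neg_of_neg_of_pos hxneg hyj
          rw [abs_of_neg (by nlinarith), abs_of_neg (by nlinarith)]
          ring
        · have hx0 : x i = 0 := le_antisymm (not_lt.1 hxi) (not_lt.1 hxneg)
          have ew2 : w2 i j = 0 := by simp [hw2, hxneg]
          rw [ew2, hx0]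
          ring_nf
      · have e1 : (γ ε).1 i = x i := by simp [hγ, hxi]
        have e2 : (γ ε).2 j = y j := by simp [hγ, hyj]
        have ec1 : c1 i j = 0 := by simp [hc1, hxi]
        have ew1 : w1 i j = 0 := by simp [hw1, hxi]
        have ew2 : w2 i j = 0 := by simp [hw2, hyj]
        rw [e1, e2, ec1, ew1, ew2]
        ring
    have hFF : FF a b (γ ε) = FF a b (x, y) + ((2*ε - ε^2) * D1 + ε * (SW1 + SW2)) := by
      simp only [FF]
      rw [Finset.sum_congr rfl fun i _ => Finset.sum_congr rfl fun j _ => key i j]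
      have e3 : ∀ i, ∑ j, (|x i * y j - a i * b j|
            + ((2*ε - ε^2) * c1 i j + ε * (w1 i j + w2 i j)))
          = (∑ j, |x i * y j - a i * b j|) + ((2*ε - ε^2) * (∑ j, c1 i j)
            + ε * ((∑ j, w1 i j) + (∑ j, w2 i j))) := by
        intro i
        rw [Finset.sum_add_distrib, Finset.sum_add_distrib, ← Finset.mul_sum,
          ← Finset.mul_sum, Finset.sum_add_distrib]
      rw [Finset.sum_congr rfl fun i _ => e3 i, Finset.sum_add_distrib,
        Finset.sum_add_distrib, ← Finset.mul_sum, ← Finset.mul_sum, Finset.sum_add_distrib]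
    rw [hFF]
    nlinarith

/-- L4 : in the nonnegative case, at a local min all positive pairs are at the kink. -/
lemma L4 {a : Fin m → ℝ} {b : Fin n → ℝ} (ha : ∀ i, 0 < a i) (hb : ∀ j, 0 < b j)
    {x : Fin m → ℝ} {y : Fin n → ℝ} (hx : ∀ i, 0 ≤ x i) (hy : ∀ j, 0 ≤ y j)
    {i0 : Fin m} (hxi0 : 0 < x i0) {j0 : Fin n} (hyj0 : 0 < y j0)
    (h : IsLocalMin (FF a b) (x, y)) :
    ∀ i j, 0 < x i → 0 < y j → x i * y j = a i * b j := by
  by_contra hcon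
  push_neg at hcon
  obtain ⟨i1, j1, hxi1, hyj1, hne1⟩ := hcon
  set P : Finset (Fin m) := Finset.univ.filter (fun i => 0 < x i) with hP
  set Q : Finset (Fin n) := Finset.univ.filter (fun j => 0 < y j) with hQ
  have hPne : P.Nonempty := ⟨i0, by rw [hP]; simp [hxi0]⟩
  have hQne : Q.Nonempty := ⟨j0, by rw [hQ]; simp [hyj0]⟩
  set ρ : ℝ := max (P.sup' hPne (fun i => x i / a i)) (Q.sup' hQne (fun j => b j / y j))
    with hρ
  have hρpos : 0 < ρ := by
    have h1 : x i0 / a i0 ≤ P.sup' hPne (fun i => x i / a i) := by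
      rw [Finset.le_sup'_iff]
      exact ⟨i0, by rw [hP]; simp [hxi0], le_refl _⟩
    have h2 : 0 < x i0 / a i0 := div_pos hxi0 (ha i0)
    calc (0:ℝ) < x i0 / a i0 := h2
    _ ≤ _ := h1.trans (le_max_left _ _)
  set topx : Fin m → Prop := fun i => 0 < x i ∧ x i = ρ * a i with htopx
  set topy : Fin n → Prop := fun j => 0 < y j ∧ b j = ρ * y j with htopy
  have f1 : ∀ i, 0 < x i → x i ≤ ρ * a i := by
    intro i hi
    have h0 : x i / a i ≤ P.sup' hPne (fun i => x i / a i) := by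
      rw [Finset.le_sup'_iff]
      exact ⟨i, by rw [hP]; simp [hi], le_refl _⟩
    have h1 : x i / a i ≤ ρ := h0.trans (le_max_left _ _)
    rw [div_le_iff₀ (ha i)] at h1
    linarith [h1]
  have f2 : ∀ j, 0 < y j → b j ≤ ρ * y j := by
    intro j hj
    have h0 : b j / y j ≤ Q.sup' hQne (fun j => b j / y j) := by
      rw [Finset.le_sup'_iff]
      exact ⟨j, by rw [hQ]; simp [hj], le_refl _⟩
    have h1 : b j / y j ≤ ρ := h0.trans (le_max_right _ _)
    rw [div_le_iff₀ hj] at h1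
    linarith [h1]
  have f3 : ∀ i j, topx i → topy j → x i * y j = a i * b j := by
    intro i j hti htj
    rw [hti.2, htj.2]
    ring
  have f4 : ∀ i j, topx i → 0 < y j → ¬ topy j → a i * b j < x i * y j := by
    intro i j hti hyj htj
    have hblt : b j < ρ * y j := by
      rcases lt_or_eq_of_le (f2 j hyj) with hlt | heq
      · exact hlt
      · exact absurd ⟨hyj, heq⟩ htj
    calc a i * b j < a i * (ρ * y j) := by
          exact mul_lt_mul_of_pos_left hblt (ha i)
    _ = x i * y j := by rw [hti.2]; ring
  have f5 : ∀ i j, 0 < x i → ¬ topx i → topy j → x i * y j < a i * b j := by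
    intro i j hxi hti htj
    have hxlt : x i < ρ * a i := by
      rcases lt_or_eq_of_le (f1 i hxi) with hlt | heq
      · exact hlt
      · exact absurd ⟨hxi, heq⟩ hti
    calc x i * y j < (ρ * a i) * y j := mul_lt_mul_of_pos_right hxlt htj.1
    _ = a i * b j := by rw [htj.2]; ring
  have hattain : (∃ i, topx i) ∨ (∃ j, topy j) := by
    rcases max_cases (P.sup' hPne (fun i => x i / a i))
      (Q.sup' hQne (fun j => b j / y j)) with ⟨hmax, _⟩ | ⟨hmax, _⟩
    · obtain ⟨i, hiP, hieq⟩ := Finset.exists_mem_eq_sup' hPne (fun i => x i / a i)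
      left
      have hxi : 0 < x i := by simpa [hP] using hiP
      refine ⟨i, hxi, ?_⟩
      have h9 : x i / a i = ρ := by rw [hρ, hmax, hieq]
      rw [div_eq_iff (ne_of_gt (ha i))] at h9
      linarith [h9]
    · obtain ⟨j, hjQ, hjeq⟩ := Finset.exists_mem_eq_sup' hQne (fun j => b j / y j)
      right
      have hyj : 0 < y j := by simpa [hQ] using hjQ
      refine ⟨j, hyj, ?_⟩
      have h9 : b j / y j = ρ := by rw [hρ, hmax, hjeq]
      rw [div_eq_iff (ne_of_gt hyj)] at h9
      linarith [h9]
  -- the per-pair coefficients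
  set g : Fin m → Fin n → ℝ := fun i j =>
    (if topx i ∧ (0 < y j ∧ ¬ topy j) then x i * y j else 0)
    + (if (0 < x i ∧ ¬ topx i) ∧ topy j then x i * y j else 0) with hg
  set k : Fin m → Fin n → ℝ := fun i j => if topx i ∧ topy j then a i * b j else 0 with hk
  set Γ := ∑ i, ∑ j, g i j with hΓ
  set K := ∑ i, ∑ j, k i j with hK
  have hgnonneg : ∀ i j, 0 ≤ g i j := by
    intro i j
    have h1 : (0:ℝ) ≤ if topx i ∧ (0 < y j ∧ ¬ topy j) then x i * y j else 0 := by
      split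
      · exact mul_nonneg (hx i) (hy j)
      · exact le_refl 0
    have h2 : (0:ℝ) ≤ if (0 < x i ∧ ¬ topx i) ∧ topy j then x i * y j else 0 := by
      split
      · exact mul_nonneg (hx i) (hy j)
      · exact le_refl 0
    simp only [hg]
    exact add_nonneg h1 h2
  have hknonneg : ∀ i j, 0 ≤ k i j := by
    intro i j
    simp only [hk]
    split
    · exact (mul_pos (ha i) (hb j)).le
    · exact le_refl 0
  have hexist : ∃ i2 j2, 0 < g i2 j2 := by
    by_cases hall : (∀ i, 0 < x i → topx i) ∧ (∀ j, 0 < y j → topy j)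
    · exact absurd (f3 i1 j1 (hall.1 i1 hxi1) (hall.2 j1 hyj1)) hne1
    · rw [not_and_or] at hall
      rcases hall with hna | hnb
      · push_neg at hna
        obtain ⟨i2, hxi2, hnt2⟩ := hna
        by_cases hty : ∃ j, topy j
        · obtain ⟨j2, htj2⟩ := hty
          refine ⟨i2, j2, ?_⟩
          simp only [hg]
          rw [if_neg (fun hc => hnt2 hc.1), if_pos ⟨⟨hxi2, hnt2⟩, htj2⟩]
          simpa using mul_pos hxi2 htj2.1
        · rcases hattain with ⟨i3, hti3⟩ | ⟨j3, htj3⟩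
          · refine ⟨i3, j0, ?_⟩
            simp only [hg]
            rw [if_pos ⟨hti3, hyj0, fun hc => hty ⟨j0, hc⟩⟩,
              if_neg (fun hc => hc.1.2 hti3)]
            simpa using mul_pos hti3.1 hyj0
          · exact absurd ⟨j3, htj3⟩ hty
      · push_neg at hnb
        obtain ⟨j2, hyj2, hnt2⟩ := hnb
        by_cases htx : ∃ i, topx i
        · obtain ⟨i2, hti2⟩ := htx
          refine ⟨i2, j2, ?_⟩
          simp only [hg]
          rw [if_pos ⟨hti2, hyj2, hnt2⟩, if_neg (fun hc => hc.1.2 hti2)]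
          simpa using mul_pos hti2.1 hyj2
        · rcases hattain with ⟨i3, hti3⟩ | ⟨j3, htj3⟩
          · exact absurd ⟨i3, hti3⟩ htx
          · refine ⟨i0, j3, ?_⟩
            simp only [hg]
            rw [if_neg (fun hc => htx ⟨i0, hc.1⟩),
              if_pos ⟨⟨hxi0, fun hc => htx ⟨i0, hc⟩⟩, htj3⟩]
            simpa using mul_pos hxi0 htj3.1
  have hΓpos : 0 < Γ := by
    obtain ⟨i2, j2, hg2⟩ := hexist
    refine Finset.sum_pos' (fun i _ => Finset.sum_nonneg fun j _ => hgnonneg i j)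
      ⟨i2, Finset.mem_univ i2, Finset.sum_pos'
        (fun j _ => hgnonneg i2 j) ⟨j2, Finset.mem_univ j2, hg2⟩⟩
  have hKnonneg : 0 ≤ K :=
    Finset.sum_nonneg fun i _ => Finset.sum_nonneg fun j _ => hknonneg i j
  -- the curve
  set γ : ℝ → (Fin m → ℝ) × (Fin n → ℝ) := fun ε =>
    (fun i => if topx i then (1-ε) * x i else x i,
     fun j => if topy j then (1+ε) * y j else y j) with hγ
  apply descend γ ?_ ?_ h
  · have hcont : Continuous γ := by
      refine Continuous.prodMk (continuous_pi fun i => ?_) (continuous_pi fun j => ?_)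
      · by_cases hc : topx i
        · simp only [if_pos hc]; fun_prop
        · simp only [if_neg hc]; fun_prop
      · by_cases hc : topy j
        · simp only [if_pos hc]; fun_prop
        · simp only [if_neg hc]; fun_prop
    have h0 : γ 0 = (x, y) := by
      simp only [hγ]
      refine Prod.ext ?_ ?_
      · funext i
        by_cases hc : topx i
        · simp only [if_pos hc]; ring
        · simp only [if_neg hc]
      · funext j
        by_cases hc : topy j
        · simp only [if_pos hc]; ring
        · simp only [if_neg hc]
    rw [← h0]
    exact (hcont.tendsto 0).mono_left nhdsWithin_le_nhds
  · have hOK2 : ∀ᶠ ε in nhdsWithin (0:ℝ) (Set.Ioi 0), ∀ i j,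
        (topx i ∧ 0 < y j ∧ ¬ topy j) → a i * b j < (1-ε) * (x i * y j) := by
      rw [eventually_all]; intro i
      rw [eventually_all]; intro j
      by_cases hc : topx i ∧ 0 < y j ∧ ¬ topy j
      · have hcont2 : Continuous (fun ε : ℝ => (1-ε) * (x i * y j)) := by fun_prop
        have ht : Tendsto (fun ε : ℝ => (1-ε) * (x i * y j))
            (nhdsWithin (0:ℝ) (Set.Ioi 0)) (nhds (x i * y j)) := by
          have := (hcont2.tendsto 0).mono_left (nhdsWithin_le_nhds (s := Set.Ioi (0:ℝ)))
          simpa using this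
        exact (ht.eventually (eventually_gt_nhds (f4 i j hc.1 hc.2.1 hc.2.2))).mono
          fun ε hε _ => hε
      · exact Filter.Eventually.of_forall fun ε hcc => absurd hcc hc
    have hOK4 : ∀ᶠ ε in nhdsWithin (0:ℝ) (Set.Ioi 0), ∀ i j,
        (0 < x i ∧ ¬ topx i ∧ topy j) → (1+ε) * (x i * y j) < a i * b j := by
      rw [eventually_all]; intro i
      rw [eventually_all]; intro j
      by_cases hc : 0 < x i ∧ ¬ topx i ∧ topy j
      · have hcont2 : Continuous (fun ε : ℝ => (1+ε) * (x i * y j)) := by fun_prop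
        have ht : Tendsto (fun ε : ℝ => (1+ε) * (x i * y j))
            (nhdsWithin (0:ℝ) (Set.Ioi 0)) (nhds (x i * y j)) := by
          have := (hcont2.tendsto 0).mono_left (nhdsWithin_le_nhds (s := Set.Ioi (0:ℝ)))
          simpa using this
        exact (ht.eventually (eventually_lt_nhds (f5 i j hc.1 hc.2.1 hc.2.2))).mono
          fun ε hε _ => hε
      · exact Filter.Eventually.of_forall fun ε hcc => absurd hcc hc
    have hsmall : ∀ᶠ ε in nhdsWithin (0:ℝ) (Set.Ioi 0), ε * (K + 1) < Γ := by
      have hδ : (0:ℝ) < Γ / (K+1) := div_pos hΓpos (by linarith)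
      filter_upwards [ioo_eventually hδ] with ε hε
      exact (lt_div_iff₀ (by linarith)).1 hε.2
    filter_upwards [hOK2, hOK4, ioo_eventually one_pos, hsmall] with ε hOK2 hOK4 hε hsmall
    obtain ⟨hε0, hε1⟩ := hε
    have key : ∀ i j, |(γ ε).1 i * (γ ε).2 j - a i * b j|
        = |x i * y j - a i * b j| + (ε^2 * k i j - ε * g i j) := by
      intro i j
      have hab : 0 < a i * b j := mul_pos (ha i) (hb j)
      by_cases htx : topx i <;> by_cases hty : topy j
      · have e1 : (γ ε).1 i = (1-ε) * x i := by simp only [hγ]; rw [if_pos htx]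
        have e2 : (γ ε).2 j = (1+ε) * y j := by simp only [hγ]; rw [if_pos hty]
        have ek : k i j = a i * b j := by simp only [hk]; rw [if_pos ⟨htx, hty⟩]
        have eg : g i j = 0 := by
          simp only [hg]
          rw [if_neg (fun hc => hc.2.2 hty), if_neg (fun hc => hc.1.2 htx)]
          ring
        have hkink := f3 i j htx hty
        rw [e1, e2, ek, eg, hkink]
        have harg : (1-ε) * (a i * b j) * ((1+ε) * y j) = (1-ε^2) * (a i * b j * y j) := by
          ring
        have : (1-ε) * x i * ((1+ε) * y j) - a i * b j = -(ε^2 * (a i * b j)) := by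
          have hx2 : x i * y j = a i * b j := hkink
          linear_combination (1 - ε^2) * hx2
        rw [this, sub_self, abs_zero, abs_neg, abs_of_nonneg (by positivity)]
        ring
      · -- topx, ¬topy
        have e1 : (γ ε).1 i = (1-ε) * x i := by simp only [hγ]; rw [if_pos htx]
        have e2 : (γ ε).2 j = y j := by simp only [hγ]; rw [if_neg hty]
        have ek : k i j = 0 := by simp only [hk]; rw [if_neg (fun hc => hty hc.2)]
        rw [e1, e2, ek]
        by_cases hyj : 0 < y j
        · have eg : g i j = x i * y j := by
            simp only [hg]
            rw [if_pos ⟨htx, hyj, hty⟩, if_neg (fun hc => hc.1.2 htx)]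
            ring
          rw [eg]
          have hgt := f4 i j htx hyj hty
          have hnew := hOK2 i j ⟨htx, hyj, hty⟩
          rw [abs_of_pos (by nlinarith), abs_of_pos (by nlinarith)]
          ring
        · have hy0 : y j = 0 := le_antisymm (not_lt.1 hyj) (hy j)
          have eg : g i j = 0 := by
            simp only [hg]
            rw [if_neg (fun hc => hyj hc.2.1), if_neg (fun hc => hty hc.2)]
            ring
          rw [eg, hy0]
          ring_nf
      · -- ¬topx, topy
        have e1 : (γ ε).1 i = x i := by simp only [hγ]; rw [if_neg htx]
        have e2 : (γ ε).2 j = (1+ε) * y j := by simp only [hγ]; rw [if_pos hty]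
        have ek : k i j = 0 := by simp only [hk]; rw [if_neg (fun hc => htx hc.1)]
        rw [e1, e2, ek]
        by_cases hxi : 0 < x i
        · have eg : g i j = x i * y j := by
            simp only [hg]
            rw [if_neg (fun hc => htx hc.1), if_pos ⟨⟨hxi, htx⟩, hty⟩]
            ring
          rw [eg]
          have hlt := f5 i j hxi htx hty
          have hnew := hOK4 i j ⟨hxi, htx, hty⟩
          rw [abs_of_neg (by nlinarith), abs_of_neg (by nlinarith)]
          ring
        · have hx0 : x i = 0 := le_antisymm (not_lt.1 hxi) (hx i)
          have eg : g i j = 0 := by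
            simp only [hg]
            rw [if_neg (fun hc => htx hc.1), if_neg (fun hc => hxi hc.1.1)]
            ring
          rw [eg, hx0]
          ring_nf
      · have e1 : (γ ε).1 i = x i := by simp only [hγ]; rw [if_neg htx]
        have e2 : (γ ε).2 j = y j := by simp only [hγ]; rw [if_neg hty]
        have ek : k i j = 0 := by simp only [hk]; rw [if_neg (fun hc => htx hc.1)]
        have eg : g i j = 0 := by
          simp only [hg]
          rw [if_neg (fun hc => htx hc.1), if_neg (fun hc => hty hc.2)]
          ring
        rw [e1, e2, ek, eg]
        ring
    have hFF : FF a b (γ ε) = FF a b (x, y) + (ε^2 * K - ε * Γ) := by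
      simp only [FF]
      rw [Finset.sum_congr rfl fun i _ => Finset.sum_congr rfl fun j _ => key i j]
      have e3 : ∀ i, ∑ j, (|x i * y j - a i * b j| + (ε^2 * k i j - ε * g i j))
          = (∑ j, |x i * y j - a i * b j|)
            + (ε^2 * (∑ j, k i j) - ε * (∑ j, g i j)) := by
        intro i
        rw [Finset.sum_add_distrib, Finset.sum_sub_distrib, ← Finset.mul_sum, ← Finset.mul_sum]
      rw [Finset.sum_congr rfl fun i _ => e3 i, Finset.sum_add_distrib,
        Finset.sum_sub_distrib, ← Finset.mul_sum, ← Finset.mul_sum]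
    rw [hFF]
    nlinarith

lemma sum_ite_prod (P : Fin m → Prop) (Q : Fin n → Prop) (x : Fin m → ℝ) (y : Fin n → ℝ) :
    ∑ i, ∑ j, (if P i ∧ Q j then x i * y j else 0)
      = (∑ i, if P i then x i else 0) * (∑ j, if Q j then y j else 0) := by
  rw [Finset.sum_mul_sum]
  refine Finset.sum_congr rfl fun i _ => Finset.sum_congr rfl fun j _ => ?_
  by_cases hp : P i <;> by_cases hq : Q j <;> simp [hp, hq]

/-- the mismatched (four nonempty sign groups) case is impossible at a local min -/
lemma mismatch_case {a : Fin m → ℝ} {b : Fin n → ℝ} (ha : ∀ i, 0 < a i) (hb : ∀ j, 0 < b j)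
    {x : Fin m → ℝ} {y : Fin n → ℝ}
    {ip : Fin m} (hip : 0 < x ip) {im : Fin m} (him : x im < 0)
    {jp : Fin n} (hjp : 0 < y jp) {jm : Fin n} (hjm : y jm < 0)
    (h : IsLocalMin (FF a b) (x, y)) : False := by
  set Xp := ∑ i, (if 0 < x i then x i else 0) with hXp
  set Xm := ∑ i, (if x i < 0 then x i else 0) with hXm
  set Yp := ∑ j, (if 0 < y j then y j else 0) with hYp
  set Ym := ∑ j, (if y j < 0 then y j else 0) with hYm
  have hXppos : 0 < Xp := by
    refine Finset.sum_pos' (fun i _ => ?_) ⟨ip, Finset.mem_univ ip, ?_⟩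
    · split <;> [linarith; exact le_refl 0]
    · rw [if_pos hip]; exact hip
  have hXmneg : Xm < 0 := by
    have : 0 < ∑ i, (if x i < 0 then -(x i) else 0) := by
      refine Finset.sum_pos' (fun i _ => ?_) ⟨im, Finset.mem_univ im, ?_⟩
      · split <;> [linarith; exact le_refl 0]
      · rw [if_pos him]; linarith
    have e : ∑ i, (if x i < 0 then -(x i) else 0) = -Xm := by
      rw [hXm, ← Finset.sum_neg_distrib]
      exact Finset.sum_congr rfl fun i _ => by split <;> simp
    rw [e] at this; linarith
  have hYppos : 0 < Yp := by
    refine Finset.sum_pos' (fun j _ => ?_) ⟨jp, Finset.mem_univ jp, ?_⟩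
    · split <;> [linarith; exact le_refl 0]
    · rw [if_pos hjp]; exact hjp
  have hYmneg : Ym < 0 := by
    have : 0 < ∑ j, (if y j < 0 then -(y j) else 0) := by
      refine Finset.sum_pos' (fun j _ => ?_) ⟨jm, Finset.mem_univ jm, ?_⟩
      · split <;> [linarith; exact le_refl 0]
      · rw [if_pos hjm]; linarith
    have e : ∑ j, (if y j < 0 then -(y j) else 0) = -Ym := by
      rw [hYm, ← Finset.sum_neg_distrib]
      exact Finset.sum_congr rfl fun j _ => by split <;> simp
    rw [e] at this; linarith
  set D1 := ∑ i, ∑ j, (if 0 < x i ∧ 0 < y j then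
      (if x i * y j = a i * b j then x i * y j
        else if a i * b j < x i * y j then -(x i * y j) else x i * y j) else 0) with hD1
  set D2 := ∑ i, ∑ j, (if x i < 0 ∧ y j < 0 then
      (if x i * y j = a i * b j then x i * y j
        else if a i * b j < x i * y j then -(x i * y j) else x i * y j) else 0) with hD2
  have hSW1 : ∑ i, ∑ j, (if 0 < x i ∧ y j < 0 then x i * y j else 0) = Xp * Ym :=
    sum_ite_prod _ _ _ _
  have hSW2 : ∑ i, ∑ j, (if x i < 0 ∧ 0 < y j then x i * y j else 0) = Xm * Yp :=
    sum_ite_prod _ _ _ _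
  have hD1le : D1 ≤ Xp * Yp := by
    rw [hD1, ← sum_ite_prod (fun i => 0 < x i) (fun j => 0 < y j) x y]
    refine Finset.sum_le_sum fun i _ => Finset.sum_le_sum fun j _ => ?_
    by_cases hc : 0 < x i ∧ 0 < y j
    · rw [if_pos hc, if_pos hc]
      have hxy : 0 < x i * y j := mul_pos hc.1 hc.2
      split
      · exact le_refl _
      · split
        · linarith
        · exact le_refl _
    · rw [if_neg hc, if_neg hc]
  have hD2le : D2 ≤ Xm * Ym := by
    have e : ∑ i, ∑ j, (if x i < 0 ∧ y j < 0 then x i * y j else 0) = Xm * Ym :=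
      sum_ite_prod _ _ _ _
    rw [hD2, ← e]
    refine Finset.sum_le_sum fun i _ => Finset.sum_le_sum fun j _ => ?_
    by_cases hc : x i < 0 ∧ y j < 0
    · rw [if_pos hc, if_pos hc]
      have hxy : 0 < x i * y j := mul_pos_of_neg_of_neg hc.1 hc.2
      split
      · exact le_refl _
      · split
        · linarith
        · exact le_refl _
    · rw [if_neg hc, if_neg hc]
  -- the key arithmetic
  have hkey : 2 * D1 + Xp * Ym + Xm * Yp ≤ 0 ∨ 2 * D2 + Xp * Ym + Xm * Yp ≤ 0 := by
    by_contra hcon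
    push_neg at hcon
    obtain ⟨h1, h2⟩ := hcon
    have hswneg : Xp * Ym + Xm * Yp < 0 := by nlinarith
    have hd1pos : 0 < D1 := by nlinarith
    have hd2pos : 0 < D2 := by nlinarith
    nlinarith [sq_nonneg (Xp * Ym - Xm * Yp), mul_pos hd1pos hd2pos,
      mul_lt_mul_of_pos_left h2 hd1pos]
  rcases hkey with hk1 | hk2
  · exact L3 ha hb hip hjm (by rw [hSW1, hSW2]; linarith) h
  · -- flip
    have h' := localmin_flip h
    have hip' : 0 < (-x) im := by simp [him]
    have hjm' : (-y) jp < 0 := by simp [hjp]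
    apply L3 ha hb hip' hjm' ?_ h'
    have e1 : ∑ i, ∑ j, (if 0 < (-x) i ∧ 0 < (-y) j then
        (if (-x) i * (-y) j = a i * b j then (-x) i * (-y) j
          else if a i * b j < (-x) i * (-y) j then -((-x) i * (-y) j)
          else (-x) i * (-y) j) else 0) = D2 := by
      rw [hD2]
      refine Finset.sum_congr rfl fun i _ => Finset.sum_congr rfl fun j _ => ?_
      have hprod : (-x) i * (-y) j = x i * y j := by simp
      have hcond : (0 < (-x) i ∧ 0 < (-y) j) ↔ (x i < 0 ∧ y j < 0) := by
        simp [neg_pos]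
      by_cases hc : x i < 0 ∧ y j < 0
      · rw [if_pos (hcond.2 hc), if_pos hc, hprod]
      · rw [if_neg (fun hcc => hc (hcond.1 hcc)), if_neg hc]
    have e2 : ∑ i, ∑ j, (if 0 < (-x) i ∧ (-y) j < 0 then (-x) i * (-y) j else 0)
        = Xm * Yp := by
      rw [← hSW2]
      refine Finset.sum_congr rfl fun i _ => Finset.sum_congr rfl fun j _ => ?_
      have hprod : (-x) i * (-y) j = x i * y j := by simp
      have hcond : (0 < (-x) i ∧ (-y) j < 0) ↔ (x i < 0 ∧ 0 < y j) := by
        simp [neg_pos, neg_lt_zero]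
      by_cases hc : x i < 0 ∧ 0 < y j
      · rw [if_pos (hcond.2 hc), if_pos hc, hprod]
      · rw [if_neg (fun hcc => hc (hcond.1 hcc)), if_neg hc]
    have e3 : ∑ i, ∑ j, (if (-x) i < 0 ∧ 0 < (-y) j then (-x) i * (-y) j else 0)
        = Xp * Ym := by
      rw [← hSW1]
      refine Finset.sum_congr rfl fun i _ => Finset.sum_congr rfl fun j _ => ?_
      have hprod : (-x) i * (-y) j = x i * y j := by simp
      have hcond : ((-x) i < 0 ∧ 0 < (-y) j) ↔ (0 < x i ∧ y j < 0) := by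
        simp [neg_pos, neg_lt_zero]
      by_cases hc : 0 < x i ∧ y j < 0
      · rw [if_pos (hcond.2 hc), if_pos hc, hprod]
      · rw [if_neg (fun hcc => hc (hcond.1 hcc)), if_neg hc]
    rw [e1, e2, e3]
    linarith

/-- positive case -/
lemma pos_case {a : Fin m → ℝ} {b : Fin n → ℝ} (ha : ∀ i, 0 < a i) (hb : ∀ j, 0 < b j)
    {x : Fin m → ℝ} {y : Fin n → ℝ} (hx : ∀ i, 0 ≤ x i) (hy : ∀ j, 0 ≤ y j)
    {i0 : Fin m} (hxi0 : 0 < x i0) {j0 : Fin n} (hyj0 : 0 < y j0)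
    (h : IsLocalMin (FF a b) (x, y)) :
    ∀ i j, x i * y j = a i * b j := by
  have hkink := L4 ha hb hx hy hxi0 hyj0 h
  have hsy : 0 < ∑ j, y j :=
    Finset.sum_pos' (fun j _ => hy j) ⟨j0, Finset.mem_univ j0, hyj0⟩
  have hsx : 0 < ∑ i, x i :=
    Finset.sum_pos' (fun i _ => hx i) ⟨i0, Finset.mem_univ i0, hxi0⟩
  have hxpos : ∀ i, 0 < x i := by
    intro i
    rcases (hx i).lt_or_eq with hlt | heq
    · exact hlt
    · exact absurd (L5 ha hb heq.symm (ne_of_gt hsy) h) (fun hf => hf)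
  have hypos : ∀ j, 0 < y j := by
    intro j
    rcases (hy j).lt_or_eq with hlt | heq
    · exact hlt
    · exact absurd (L5 hb ha heq.symm (ne_of_gt hsx) (localmin_swap h)) (fun hf => hf)
  exact fun i j => hkink i j (hxpos i) (hypos j)

/-- THEOREM** : at any local min of the all-positive problem, all pairs are at the kink. -/
theorem allpos_kinks {a : Fin m → ℝ} {b : Fin n → ℝ} (ha : ∀ i, 0 < a i) (hb : ∀ j, 0 < b j)
    (hm : 0 < m) (hn : 0 < n) {x : Fin m → ℝ} {y : Fin n → ℝ}
    (h : IsLocalMin (FF a b) (x, y)) :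
    ∀ i j, x i * y j = a i * b j := by
  -- y ≠ 0 and x ≠ 0
  have hyne : ∃ j, y j ≠ 0 := by
    by_contra hc
    push_neg at hc
    have hy0 : y = 0 := funext fun j => hc j
    rw [hy0] at h
    exact L1 ha hb hm hn h
  have hxne : ∃ i, x i ≠ 0 := by
    by_contra hc
    push_neg at hc
    have hx0 : x = 0 := funext fun i => hc i
    rw [hx0] at h
    exact L1 hb ha hn hm (localmin_swap h)
  by_cases hxnn : ∀ i, 0 ≤ x i
  · -- x ≥ 0
    obtain ⟨i0, hi0⟩ := hxne
    have hxi0 : 0 < x i0 := (hxnn i0).lt_of_ne (Ne.symm hi0)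
    have hynn : ∀ j, 0 ≤ y j := by
      intro j
      by_contra hcj
      exact L2 ha hb hxnn hxi0 (not_le.1 hcj) h
    obtain ⟨j0, hj0⟩ := hyne
    have hyj0 : 0 < y j0 := (hynn j0).lt_of_ne (Ne.symm hj0)
    exact pos_case ha hb hxnn hynn hxi0 hyj0 h
  · push_neg at hxnn
    obtain ⟨im, him⟩ := hxnn
    by_cases hxnp : ∀ i, x i ≤ 0
    · -- x ≤ 0 : flip to the positive case
      have hynp : ∀ j, y j ≤ 0 := by
        intro j
        by_contra hcj
        have hyj : 0 < y j := not_le.1 hcj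
        refine L2 ha hb (x := -x) (y := -y)
          (fun i => neg_nonneg.2 (hxnp i)) (i0 := im) (by simpa using him)
          (j0 := j) (by simpa using hyj) (localmin_flip h)
      obtain ⟨jm, hjm⟩ := hyne
      have hyjm : y jm < 0 := (hynp jm).lt_of_ne hjm
      have hres := pos_case ha hb (x := -x) (y := -y)
        (fun i => neg_nonneg.2 (hxnp i)) (fun j => neg_nonneg.2 (hynp j))
        (i0 := im) (by simpa using him) (j0 := jm) (by simpa using hyjm)
        (localmin_flip h)
      intro i j
      have := hres i j
      simpa using this
    · push_neg at hxnp
      obtain ⟨ip, hip⟩ := hxnp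
      -- mixed signs in x ⇒ mixed signs in y ⇒ mismatch case, impossible
      have hfp : ∃ j, 0 < y j := by
        by_contra hc
        push_neg at hc
        obtain ⟨jm, hjm⟩ := hyne
        have hyjm : y jm < 0 := (hc jm).lt_of_ne hjm
        exact L2 hb ha (x := -y) (y := -x)
          (fun j => neg_nonneg.2 (hc j)) (i0 := jm) (by simpa using hyjm)
          (j0 := ip) (by simpa using hip) (localmin_flip (localmin_swap h))
      have hfm : ∃ j, y j < 0 := by
        by_contra hc
        push_neg at hc
        obtain ⟨jp, hjp⟩ := hyne
        have hyjp : 0 < y jp := (hc jp).lt_of_ne (Ne.symm hjp)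
        exact L2 hb ha (x := y) (y := x) hc (i0 := jp) hyjp (j0 := im) him
          (localmin_swap h)
      obtain ⟨jp, hjp⟩ := hfp
      obtain ⟨jm, hjm⟩ := hfm
      exact absurd (mismatch_case ha hb hip him hjp hjm h) (fun hf => hf)

/-- The point `(0, 2·e_{j2})` is a local min when column `j2` of `M` is zero. -/
lemma col_localmin {M : Matrix (Fin m) (Fin n) ℝ} {j2 : Fin n}
    (hcol : ∀ i, M i j2 = 0) :
    IsLocalMin (fun q : (Fin m → ℝ) × (Fin n → ℝ) => ∑ i, ∑ j, |q.1 i * q.2 j - M i j|)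
      ((0 : Fin m → ℝ), fun j => if j = j2 then 2 else 0) := by
  set w : Fin n → ℝ := fun j => if j = j2 then 2 else 0 with hw
  set δ : ℝ := 1/((n:ℝ)+1) with hδdef
  have hnpos : (0:ℝ) < (n:ℝ)+1 := by positivity
  have hδpos : 0 < δ := by positivity
  have hδsum : ((n:ℝ)+1) * δ = 1 := by
    rw [hδdef]; field_simp
  have hδle : δ ≤ 1 := by nlinarith
  show ∀ᶠ q in nhds ((0 : Fin m → ℝ), w), _ ≤ _
  rw [Metric.eventually_nhds_iff]
  refine ⟨δ, hδpos, fun q hq => ?_⟩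
  have hj : ∀ j, |q.2 j - w j| < δ := by
    intro j
    have h1 : dist (q.2 j) (w j) ≤ dist q.2 w := dist_le_pi_dist _ _ j
    have h2 : dist q.2 w ≤ dist q ((0 : Fin m → ℝ), w) := by
      rw [Prod.dist_eq]
      exact le_max_right _ _
    have := lt_of_le_of_lt (h1.trans h2) hq
    rwa [Real.dist_eq] at this
  -- value at the point
  have hfp : (∑ i, ∑ j, |(0:ℝ) * w j - M i j|) = ∑ i, ∑ j, |M i j| := by
    refine Finset.sum_congr rfl fun i _ => Finset.sum_congr rfl fun j _ => ?_
    rw [zero_mul, zero_sub, abs_neg]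
  have hinner : ∀ i, (∑ j, |M i j|) ≤ ∑ j, |q.1 i * q.2 j - M i j| := by
    intro i
    set A := |q.1 i| with hA
    have hAnn : 0 ≤ A := abs_nonneg _
    have e1 : (∑ j, |M i j|) = ∑ j ∈ Finset.univ.erase j2, |M i j| := by
      rw [← Finset.add_sum_erase _ _ (Finset.mem_univ j2), hcol i, abs_zero, zero_add]
    have e2 : ∑ j, |q.1 i * q.2 j - M i j|
        = |q.1 i * q.2 j2| + ∑ j ∈ Finset.univ.erase j2, |q.1 i * q.2 j - M i j| := by
      rw [← Finset.add_sum_erase _ _ (Finset.mem_univ j2), hcol i, sub_zero]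
    have hterm : ∀ j ∈ Finset.univ.erase j2,
        |M i j| - A * δ ≤ |q.1 i * q.2 j - M i j| := by
      intro j hjmem
      have hjne : j ≠ j2 := Finset.ne_of_mem_erase hjmem
      have hq2 : |q.2 j| ≤ δ := by
        have h9 := hj j
        have hwj : w j = 0 := by rw [hw]; simp [hjne]
        rw [hwj, sub_zero] at h9
        exact h9.le
      have h1 : |M i j| - |q.1 i * q.2 j| ≤ |q.1 i * q.2 j - M i j| := by
        rw [abs_sub_comm]
        exact abs_sub_abs_le_abs_sub _ _
      have h2 : |q.1 i * q.2 j| = A * |q.2 j| := abs_mul _ _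
      nlinarith [abs_nonneg (q.2 j)]
    have h3 : ∑ j ∈ Finset.univ.erase j2, (|M i j| - A * δ)
        ≤ ∑ j ∈ Finset.univ.erase j2, |q.1 i * q.2 j - M i j| :=
      Finset.sum_le_sum hterm
    have h4 : ∑ j ∈ Finset.univ.erase j2, (|M i j| - A * δ)
        = (∑ j ∈ Finset.univ.erase j2, |M i j|)
          - ((Finset.univ.erase j2).card : ℝ) * (A * δ) := by
      rw [Finset.sum_sub_distrib, Finset.sum_const, nsmul_eq_mul]
    have hcard : ((Finset.univ.erase j2).card : ℝ) ≤ (n:ℝ) := by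
      have := Finset.card_erase_of_mem (Finset.mem_univ j2)
      rw [this]
      have : (Finset.univ : Finset (Fin n)).card = n := by simp
      rw [this]
      exact_mod_cast Nat.sub_le n 1
    have h5 : A * (2 - δ) ≤ |q.1 i * q.2 j2| := by
      have h9 := hj j2
      have hwj : w j2 = 2 := by rw [hw]; simp
      rw [hwj] at h9
      have h10 : 2 - δ ≤ |q.2 j2| := by
        cases abs_cases (q.2 j2 - 2) with
        | inl hc => cases abs_cases (q.2 j2) with
          | inl hd => linarith [hc.1, hd.1, h9]
          | inr hd => linarith [hc.1, hd.1, h9]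
        | inr hc => cases abs_cases (q.2 j2) with
          | inl hd => linarith [hc.1, hd.1, h9]
          | inr hd => linarith [hc.1, hd.1, h9]
      calc A * (2 - δ) ≤ A * |q.2 j2| :=
            mul_le_mul_of_nonneg_left h10 hAnn
      _ = |q.1 i * q.2 j2| := (abs_mul _ _).symm
    have hcoef : 0 ≤ A * (2 - δ) - (((Finset.univ.erase j2).card : ℝ)) * (A * δ) := by
      have : (((Finset.univ.erase j2).card : ℝ)) * (A * δ) ≤ (n:ℝ) * (A * δ) :=
        mul_le_mul_of_nonneg_right hcard (by positivity)
      nlinarith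
    calc (∑ j, |M i j|) = ∑ j ∈ Finset.univ.erase j2, |M i j| := e1
    _ ≤ (∑ j ∈ Finset.univ.erase j2, |M i j|)
        + (A * (2 - δ) - (((Finset.univ.erase j2).card : ℝ)) * (A * δ)) := by linarith
    _ ≤ |q.1 i * q.2 j2| + ((∑ j ∈ Finset.univ.erase j2, |M i j|)
        - (((Finset.univ.erase j2).card : ℝ)) * (A * δ)) := by linarith
    _ ≤ |q.1 i * q.2 j2| + ∑ j ∈ Finset.univ.erase j2, |q.1 i * q.2 j - M i j| := by
        rw [← h4] at *
        linarith
    _ = ∑ j, |q.1 i * q.2 j - M i j| := e2.symm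
  calc (∑ i, ∑ j, |(0:Fin m → ℝ) i * w j - M i j|)
      = ∑ i, ∑ j, |M i j| := by
        refine Finset.sum_congr rfl fun i _ => Finset.sum_congr rfl fun j _ => ?_
        simp
  _ ≤ ∑ i, ∑ j, |q.1 i * q.2 j - M i j| := Finset.sum_le_sum fun i _ => hinner i

end NoSpuriousAux

/-- For `M` of rank at most one, the ℓ¹ rank-one factorization objective
`f(x,y) = Σᵢ Σⱼ |xᵢ yⱼ − Mᵢⱼ|` has the property that every local minimum is a global
minimum if and only if either all entries of `M` are zero or all entries are nonzero. -/
theorem no_spurious_local_minima_iff (m n : ℕ) (hm : 1 ≤ m) (hn : 1 ≤ n)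
    (M : Matrix (Fin m) (Fin n) ℝ) (hrank : M.rank ≤ 1) :
    (∀ p : (Fin m → ℝ) × (Fin n → ℝ),
        IsLocalMin (fun q : (Fin m → ℝ) × (Fin n → ℝ) =>
          ∑ i, ∑ j, |q.1 i * q.2 j - M i j|) p →
        ∀ q : (Fin m → ℝ) × (Fin n → ℝ),
          (∑ i, ∑ j, |p.1 i * p.2 j - M i j|) ≤ ∑ i, ∑ j, |q.1 i * q.2 j - M i j|)
      ↔ ((∀ i j, M i j = 0) ∨ (∀ i j, M i j ≠ 0)) := by
  obtain ⟨u, v, huv⟩ := rank_le_one_outer M hrank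
  constructor
  · -- forward: no spurious ⇒ all-zero or all-nonzero
    intro H
    by_contra hcon
    push_neg at hcon
    obtain ⟨h1, h2⟩ := hcon
    obtain ⟨i1, j1, hne⟩ := h1
    obtain ⟨i2, j2, heq2⟩ := h2
    -- value 0 at (u,v)
    have huv0 : (∑ i, ∑ j, |u i * v j - M i j|) = 0 := by
      refine Finset.sum_eq_zero fun i _ => Finset.sum_eq_zero fun j _ => ?_
      rw [← huv, sub_self, abs_zero]
    have hS : 0 < ∑ i, ∑ j, |M i j| := by
      refine Finset.sum_pos' (fun i _ => Finset.sum_nonneg fun j _ => abs_nonneg _)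
        ⟨i1, Finset.mem_univ i1, Finset.sum_pos' (fun j _ => abs_nonneg _)
          ⟨j1, Finset.mem_univ j1, abs_pos.2 hne⟩⟩
    have hrc : (∀ j, M i2 j = 0) ∨ (∀ i, M i j2 = 0) := by
      have h9 : u i2 * v j2 = 0 := by rw [← huv]; exact heq2
      rcases mul_eq_zero.1 h9 with h9 | h9
      · exact Or.inl fun j => by rw [huv, h9, zero_mul]
      · exact Or.inr fun i => by rw [huv, h9, mul_zero]
    rcases hrc with hrow | hcol
    · -- zero row i2: local min at (2·e_{i2}, 0)
      have hN := col_localmin (M := (fun j i => M i j : Matrix (Fin n) (Fin m) ℝ))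
        (j2 := i2) (fun j => hrow j)
      have h' := localmin_comp hN
        (φ := fun z : (Fin m → ℝ) × (Fin n → ℝ) => (z.2, z.1))
        (q := ((fun i => if i = i2 then 2 else 0 : Fin m → ℝ), (0 : Fin n → ℝ)))
        (Continuous.continuousAt (by fun_prop)) rfl
      have h'2 : IsLocalMin (fun z : (Fin m → ℝ) × (Fin n → ℝ) =>
          ∑ j, ∑ i, |z.2 j * z.1 i - M i j|)
          ((fun i => if i = i2 then 2 else 0 : Fin m → ℝ), (0 : Fin n → ℝ)) := h'
      have heqf : (fun z : (Fin m → ℝ) × (Fin n → ℝ) =>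
          ∑ j, ∑ i, |z.2 j * z.1 i - M i j|)
          = (fun z : (Fin m → ℝ) × (Fin n → ℝ) =>
            ∑ i, ∑ j, |z.1 i * z.2 j - M i j|) := by
        funext z
        rw [Finset.sum_comm]
        exact Finset.sum_congr rfl fun i _ => Finset.sum_congr rfl fun j _ => by
          rw [mul_comm]
      rw [heqf] at h'2
      have hval := H _ h'2 (u, v)
      rw [huv0] at hval
      have hvalp : (∑ i, ∑ j, |(fun i => if i = i2 then (2:ℝ) else 0) i * (0:Fin n → ℝ) j
          - M i j|) = ∑ i, ∑ j, |M i j| := by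
        refine Finset.sum_congr rfl fun i _ => Finset.sum_congr rfl fun j _ => ?_
        simp
      rw [hvalp] at hval
      linarith
    · have h' := col_localmin (M := M) (j2 := j2) hcol
      have hval := H _ h' (u, v)
      rw [huv0] at hval
      have hvalp : (∑ i, ∑ j, |(0:Fin m → ℝ) i * (fun j => if j = j2 then (2:ℝ) else 0) j
          - M i j|) = ∑ i, ∑ j, |M i j| := by
        refine Finset.sum_congr rfl fun i _ => Finset.sum_congr rfl fun j _ => ?_
        simp
      rw [hvalp] at hval
      linarith
  · -- backward
    intro hM p hp q
    rcases hM with hz | hnz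
    · -- M = 0
      have hval : (∑ i, ∑ j, |p.1 i * p.2 j - M i j|) = 0 := by
        by_contra hne
        have hpos : 0 < ∑ i, ∑ j, |p.1 i * p.2 j - M i j| :=
          lt_of_le_of_ne (Finset.sum_nonneg fun i _ =>
            Finset.sum_nonneg fun j _ => abs_nonneg _) (Ne.symm hne)
        set γ : ℝ → (Fin m → ℝ) × (Fin n → ℝ) :=
          fun ε => (p.1, fun j => (1-ε) * p.2 j) with hγ
        refine descend γ ?_ ?_ hp
        · have hcont : Continuous γ := by
            apply Continuous.prodMk continuous_const
            exact continuous_pi fun j => by fun_prop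
          have h0 : γ 0 = p := by
            rw [hγ]
            refine Prod.ext rfl ?_
            funext j; simp
          rw [← h0]
          exact (hcont.tendsto 0).mono_left nhdsWithin_le_nhds
        · filter_upwards [ioo_eventually one_pos] with ε hε
          obtain ⟨hε0, hε1⟩ := hε
          have hkey : ∀ i j, |(γ ε).1 i * (γ ε).2 j - M i j|
              = (1-ε) * |p.1 i * p.2 j - M i j| := by
            intro i j
            rw [hγ]
            simp only [hz i j, sub_zero]
            rw [show p.1 i * ((1-ε) * p.2 j) = (1-ε) * (p.1 i * p.2 j) by ring,
              abs_mul, abs_of_pos (by linarith)]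
          calc (∑ i, ∑ j, |(γ ε).1 i * (γ ε).2 j - M i j|)
              = (1-ε) * ∑ i, ∑ j, |p.1 i * p.2 j - M i j| := by
                rw [Finset.mul_sum]
                refine Finset.sum_congr rfl fun i _ => ?_
                rw [Finset.mul_sum]
                exact Finset.sum_congr rfl fun j _ => hkey i j
          _ < ∑ i, ∑ j, |p.1 i * p.2 j - M i j| := by nlinarith
      rw [hval]
      exact Finset.sum_nonneg fun i _ => Finset.sum_nonneg fun j _ => abs_nonneg _
    · -- all entries nonzero
      have hu : ∀ i, u i ≠ 0 := by
        intro i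
        have h9 := hnz i ⟨0, hn⟩
        rw [huv] at h9
        exact left_ne_zero_of_mul h9
      have hv : ∀ j, v j ≠ 0 := by
        intro j
        have h9 := hnz ⟨0, hm⟩ j
        rw [huv] at h9
        exact right_ne_zero_of_mul h9
      set s : Fin m → ℝ := fun i => if u i < 0 then -1 else 1 with hs
      set t : Fin n → ℝ := fun j => if v j < 0 then -1 else 1 with ht
      have hss : ∀ i, s i * s i = 1 := by
        intro i; rw [hs]; by_cases hc : u i < 0 <;> simp [hc]
      have htt : ∀ j, t j * t j = 1 := by
        intro j; rw [ht]; by_cases hc : v j < 0 <;> simp [hc]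
      set a : Fin m → ℝ := fun i => s i * u i with ha'
      set b : Fin n → ℝ := fun j => t j * v j with hb'
      have ha : ∀ i, 0 < a i := by
        intro i
        rw [ha', hs]
        by_cases hc : u i < 0
        · simp only [if_pos hc]; nlinarith
        · simp only [if_neg hc]
          have := (hu i).lt_or_gt.resolve_left hc
          nlinarith
      have hb : ∀ j, 0 < b j := by
        intro j
        rw [hb', ht]
        by_cases hc : v j < 0
        · simp only [if_pos hc]; nlinarith
        · simp only [if_neg hc]
          have := (hv j).lt_or_gt.resolve_left hc
          nlinarith
      set φ : (Fin m → ℝ) × (Fin n → ℝ) → (Fin m → ℝ) × (Fin n → ℝ) :=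
        fun z => (fun i => s i * z.1 i, fun j => t j * z.2 j) with hφ
      have hφφ : ∀ z, φ (φ z) = z := by
        intro z
        rw [hφ]
        refine Prod.ext ?_ ?_
        · funext i
          simp only []
          rw [← mul_assoc, hss i, one_mul]
        · funext j
          simp only []
          rw [← mul_assoc, htt j, one_mul]
      have hfφ : ∀ z, (∑ i, ∑ j, |(φ z).1 i * (φ z).2 j - M i j|) = FF a b z := by
        intro z
        refine Finset.sum_congr rfl fun i _ => Finset.sum_congr rfl fun j _ => ?_
        rw [hφ]
        simp only [FF]
        have he : s i * z.1 i * (t j * z.2 j) - M i j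
            = (s i * t j) * (z.1 i * z.2 j - a i * b j) := by
          rw [huv, ha', hb']
          linear_combination (u i * v j * (t j * t j)) * hss i + (u i * v j) * htt j
        rw [he, abs_mul]
        have habs : |s i * t j| = 1 := by
          rw [hs, ht]
          by_cases hc : u i < 0 <;> by_cases hd : v j < 0 <;> simp [hc, hd]
        rw [habs, one_mul]
      have hloc' : IsLocalMin (FF a b) (φ p) := by
        have h9 := localmin_comp hp (φ := φ) (q := φ p)
          (Continuous.continuousAt (by rw [hφ]; fun_prop)) (hφφ p)
        have h10 : (fun z => ∑ i, ∑ j, |(φ z).1 i * (φ z).2 j - M i j|) = FF a b :=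
          funext hfφ
        rwa [h10] at h9
      have hkinks := allpos_kinks ha hb hm hn (x := (φ p).1) (y := (φ p).2) hloc'
      have hval : (∑ i, ∑ j, |p.1 i * p.2 j - M i j|) = 0 := by
        have h11 : (∑ i, ∑ j, |p.1 i * p.2 j - M i j|)
            = (∑ i, ∑ j, |(φ (φ p)).1 i * (φ (φ p)).2 j - M i j|) := by
          rw [hφφ p]
        rw [h11, hfφ (φ p)]
        simp only [FF]
        refine Finset.sum_eq_zero fun i _ => Finset.sum_eq_zero fun j _ => ?_
        rw [hkinks i j, sub_self, abs_zero]
      rw [hval]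
      exact Finset.sum_nonneg fun i _ => Finset.sum_nonneg fun j _ => abs_nonneg _
end

section
/- If (x,y) ∈ ℝ^m × ℝ^n is a critical point of f, then either f(x,y) = 0, or both |Σ_{i : u_i ≠ 0} sgn(u_i) x_i| ≤ Σ_{i : u_i = 0} |x_i| and |Σ_{j : v_j ≠ 0} sgn(v_j) y_j| ≤ Σ_{j : v_j = 0} |y_j| hold (these two inequalities express that 0 ∈ ∂α(0) ∩ ∂β(0) for the step functions ∂α(t) = Σ_j sign(y_j t − v_j) y_j and ∂β(t) = Σ_i sign(x_i t − u_i) x_i). -/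
open scoped Classical

/-- The set-valued sign function: `{-1}` for negative, `[-1,1]` at zero, `{1}` for positive. -/
noncomputable def signSet (t : ℝ) : Set ℝ :=
  if t < 0 then {-1} else if 0 < t then {1} else Set.Icc (-1) 1

lemma signSet_of_neg {t l : ℝ} (ht : t < 0) (h : l ∈ signSet t) : l = -1 := by
  simp only [signSet, if_pos ht, Set.mem_singleton_iff] at h; exact h

lemma signSet_of_pos {t l : ℝ} (ht : 0 < t) (h : l ∈ signSet t) : l = 1 := by
  simp only [signSet, if_neg (not_lt_of_gt ht), if_pos ht, Set.mem_singleton_iff] at h; exact h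

lemma signSet_mul {t l : ℝ} (h : l ∈ signSet t) : l * t = |t| := by
  rcases lt_trichotomy t 0 with h1 | h1 | h1
  · rw [signSet_of_neg h1 h, abs_of_neg h1]; ring
  · simp [h1]
  · rw [signSet_of_pos h1 h, abs_of_pos h1]; ring

lemma signSet_abs_le {t l : ℝ} (h : l ∈ signSet t) : |l| ≤ 1 := by
  unfold signSet at h
  split_ifs at h with h1 h2
  · simp only [Set.mem_singleton_iff] at h; simp [h]
  · simp only [Set.mem_singleton_iff] at h; simp [h]
  · exact abs_le.2 ⟨h.1, h.2⟩

lemma signSet_mul_le {t l : ℝ} (h : l ∈ signSet t) (w : ℝ) : l * w ≤ |w| :=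
  calc l * w ≤ |l * w| := le_abs_self _
    _ = |l| * |w| := abs_mul _ _
    _ ≤ 1 * |w| := mul_le_mul_of_nonneg_right (signSet_abs_le h) (abs_nonneg w)
    _ = |w| := one_mul _

lemma exists_eps (m : ℕ) (hm : 1 ≤ m) (u x : Fin m → ℝ) :
    ∃ ε : ℝ, 0 < ε ∧ ∀ i, u i ≠ 0 → |x i| * ε < |u i| := by
  have hne : (Finset.univ : Finset (Fin m)).Nonempty := ⟨⟨0, hm⟩, Finset.mem_univ _⟩
  set f : Fin m → ℝ := fun i => if u i = 0 then 1 else |u i| / (|x i| + 1) with hf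
  refine ⟨Finset.univ.inf' hne f, ?_, ?_⟩
  · rw [Finset.lt_inf'_iff]
    intro i _
    by_cases h : u i = 0
    · simp [hf, h]
    · have hu : 0 < |u i| := abs_pos.2 h
      have hx : (0:ℝ) < |x i| + 1 := by positivity
      simp only [hf, if_neg h]
      positivity
  · intro i hi
    have h1 : Finset.univ.inf' hne f ≤ f i := Finset.inf'_le _ (Finset.mem_univ i)
    have hfi : f i = |u i| / (|x i| + 1) := if_neg hi
    have hu : 0 < |u i| := abs_pos.2 hi
    have hx : (0:ℝ) ≤ |x i| := abs_nonneg _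
    have hx1 : (0:ℝ) < |x i| + 1 := by positivity
    have hd : (|x i| + 1) * (|u i| / (|x i| + 1)) = |u i| := mul_div_cancel₀ _ (ne_of_gt hx1)
    have h2 : |x i| * Finset.univ.inf' hne f ≤ |x i| * (|u i| / (|x i| + 1)) := by
      apply mul_le_mul_of_nonneg_left _ hx
      rw [hfi] at h1; exact h1
    have hdpos : 0 < |u i| / (|x i| + 1) := by positivity
    nlinarith

lemma abs_eps_eq {a v : ℝ} (hv : v ≠ 0) (h : |a| < |v|) :
    |a - v| = |v| - Real.sign v * a := by
  rcases abs_lt.1 h with ⟨hl, hr⟩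
  rcases hv.lt_or_gt with h1 | h1
  · rw [Real.sign_of_neg h1, abs_of_neg h1] at *
    rw [abs_of_pos (by linarith)]; ring
  · rw [Real.sign_of_pos h1, abs_of_pos h1] at *
    rw [abs_of_neg (by linarith)]; ring

lemma abs_sub_sign_le {a v : ℝ} (hv : v ≠ 0) : |v| - Real.sign v * a ≤ |a - v| := by
  rcases hv.lt_or_gt with h1 | h1
  · rw [Real.sign_of_neg h1, abs_of_neg h1]
    rcases le_or_gt v a with h2 | h2
    · rw [abs_of_nonneg (by linarith)]; ring_nf; linarith
    · rw [abs_of_neg (by linarith)]; ring_nf; linarith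
  · rw [Real.sign_of_pos h1, abs_of_pos h1]
    rcases le_or_gt v a with h2 | h2
    · rw [abs_of_nonneg (by linarith)]; linarith
    · rw [abs_of_neg (by linarith)]; linarith

lemma beta_eps (n : ℕ) (v y : Fin n → ℝ) (ε : ℝ) (hε0 : 0 < ε)
    (hε : ∀ j, v j ≠ 0 → |y j| * ε < |v j|)
    (hpos : ∑ j ∈ Finset.univ.filter (fun j => v j = 0), |y j|
          < ∑ j ∈ Finset.univ.filter (fun j => v j ≠ 0), Real.sign (v j) * y j) :
    ∑ j, |y j * ε - v j| < ∑ j, |v j| := by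
  classical
  have hsplit := Finset.sum_filter_add_sum_filter_not Finset.univ
    (fun j => v j = 0) (fun j => |y j * ε - v j|)
  have hsplit2 := Finset.sum_filter_add_sum_filter_not Finset.univ
    (fun j => v j = 0) (fun j => |v j|)
  have h1 : ∑ j ∈ Finset.univ.filter (fun j => v j = 0), |y j * ε - v j|
      = (∑ j ∈ Finset.univ.filter (fun j => v j = 0), |y j|) * ε := by
    rw [Finset.sum_mul]
    refine Finset.sum_congr rfl fun j hj => ?_
    have hvj : v j = 0 := (Finset.mem_filter.1 hj).2
    rw [hvj, sub_zero, abs_mul, abs_of_pos hε0]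
  have h2 : ∑ j ∈ Finset.univ.filter (fun j => ¬ v j = 0), |y j * ε - v j|
      = ∑ j ∈ Finset.univ.filter (fun j => ¬ v j = 0),
          (|v j| - Real.sign (v j) * y j * ε) := by
    refine Finset.sum_congr rfl fun j hj => ?_
    have hvj : v j ≠ 0 := (Finset.mem_filter.1 hj).2
    have habs : |y j * ε| < |v j| := by
      rw [abs_mul, abs_of_pos hε0]; exact hε j hvj
    rw [abs_eps_eq hvj habs]; ring
  have h3 : ∑ j ∈ Finset.univ.filter (fun j => ¬ v j = 0),
        (|v j| - Real.sign (v j) * y j * ε)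
      = (∑ j ∈ Finset.univ.filter (fun j => ¬ v j = 0), |v j|)
        - (∑ j ∈ Finset.univ.filter (fun j => ¬ v j = 0), Real.sign (v j) * y j) * ε := by
    rw [Finset.sum_sub_distrib, Finset.sum_mul]
  have h4 : ∑ j ∈ Finset.univ.filter (fun j => v j = 0), |v j| = 0 := by
    refine Finset.sum_eq_zero fun j hj => ?_
    rw [(Finset.mem_filter.1 hj).2, abs_zero]
  have hfe : (Finset.univ.filter (fun j => ¬ v j = 0))
      = (Finset.univ.filter (fun j => v j ≠ 0)) := rfl
  rw [← hsplit, ← hsplit2, h1, h2, h3, h4, hfe]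
  nlinarith

lemma beta_neg (n : ℕ) (v y : Fin n → ℝ) (r : ℝ) (hr : r ≤ 0)
    (hpos : ∑ j ∈ Finset.univ.filter (fun j => v j = 0), |y j|
          ≤ ∑ j ∈ Finset.univ.filter (fun j => v j ≠ 0), Real.sign (v j) * y j) :
    ∑ j, |v j| ≤ ∑ j, |y j * r - v j| := by
  classical
  have hsplit := Finset.sum_filter_add_sum_filter_not Finset.univ
    (fun j => v j = 0) (fun j => |y j * r - v j|)
  have hsplit2 := Finset.sum_filter_add_sum_filter_not Finset.univ
    (fun j => v j = 0) (fun j => |v j|)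
  have h4 : ∑ j ∈ Finset.univ.filter (fun j => v j = 0), |v j| = 0 := by
    refine Finset.sum_eq_zero fun j hj => ?_
    rw [(Finset.mem_filter.1 hj).2, abs_zero]
  have h1 : (∑ j ∈ Finset.univ.filter (fun j => v j = 0), |y j|) * r
      ≤ ∑ j ∈ Finset.univ.filter (fun j => v j = 0), |y j * r - v j| := by
    rw [Finset.sum_mul]
    refine Finset.sum_le_sum fun j hj => ?_
    have hvj : v j = 0 := (Finset.mem_filter.1 hj).2
    rw [hvj, sub_zero]
    have : |y j| * r ≤ 0 := mul_nonpos_of_nonneg_of_nonpos (abs_nonneg _) hr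
    exact le_trans this (abs_nonneg _)
  have h2 : (∑ j ∈ Finset.univ.filter (fun j => ¬ v j = 0), |v j|)
        - (∑ j ∈ Finset.univ.filter (fun j => ¬ v j = 0), Real.sign (v j) * y j) * r
      ≤ ∑ j ∈ Finset.univ.filter (fun j => ¬ v j = 0), |y j * r - v j| := by
    rw [Finset.sum_mul, ← Finset.sum_sub_distrib]
    refine Finset.sum_le_sum fun j hj => ?_
    have hvj : v j ≠ 0 := (Finset.mem_filter.1 hj).2
    have := abs_sub_sign_le (a := y j * r) hvj
    calc |v j| - Real.sign (v j) * y j * r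
        = |v j| - Real.sign (v j) * (y j * r) := by ring
      _ ≤ |y j * r - v j| := this
  have hfe : (Finset.univ.filter (fun j => ¬ v j = 0))
      = (Finset.univ.filter (fun j => v j ≠ 0)) := rfl
  rw [← hsplit, ← hsplit2, h4]
  rw [← hfe] at hpos
  have hmul : (∑ j ∈ Finset.univ.filter (fun j => ¬ v j = 0), Real.sign (v j) * y j) * r
      ≤ (∑ j ∈ Finset.univ.filter (fun j => v j = 0), |y j|) * r :=
    mul_le_mul_of_nonpos_right hpos hr
  linarith
lemma sign_term (l w c : ℝ) (hw : w ≠ 0) (hc : 0 < c)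
    (hl : l ∈ signSet (w * c - w)) :
    0 ≤ l * (w * c) * Real.log c ∧ (l * (w * c) * Real.log c = 0 → c = 1) := by
  rcases lt_trichotomy c 1 with h1 | h1 | h1
  · have hlog : Real.log c < 0 := Real.log_neg hc h1
    have hpos : 0 < l * (w * c) * Real.log c := by
      rcases hw.lt_or_gt with hwn | hwp
      · have hd : 0 < w * c - w := by nlinarith
        rw [signSet_of_pos hd hl]
        have : w * c < 0 := mul_neg_of_neg_of_pos hwn hc
        nlinarith
      · have hd : w * c - w < 0 := by nlinarith
        rw [signSet_of_neg hd hl]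
        have : 0 < w * c := mul_pos hwp hc
        nlinarith
    exact ⟨hpos.le, fun h => absurd h.symm (ne_of_lt hpos)⟩
  · subst h1; simp
  · have hlog : 0 < Real.log c := Real.log_pos h1
    have hpos : 0 < l * (w * c) * Real.log c := by
      rcases hw.lt_or_gt with hwn | hwp
      · have hd : w * c - w < 0 := by nlinarith
        rw [signSet_of_neg hd hl]
        have : w * c < 0 := mul_neg_of_neg_of_pos hwn hc
        nlinarith
      · have hd : 0 < w * c - w := by nlinarith
        rw [signSet_of_pos hd hl]
        have : 0 < w * c := mul_pos hwp hc
        nlinarith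
    exact ⟨hpos.le, fun h => absurd h.symm (ne_of_lt hpos)⟩

lemma main_lt (m n : ℕ) (hm : 1 ≤ m) (hn : 1 ≤ n)
    (u x : Fin m → ℝ) (v y : Fin n → ℝ) (Λ : Matrix (Fin m) (Fin n) ℝ)
    (hΛ : ∀ i j, Λ i j ∈ signSet (x i * y j - u i * v j))
    (hrow : ∀ i, ∑ j, Λ i j * y j = 0) (hcol : ∀ j, ∑ i, Λ i j * x i = 0)
    (hT : ∑ i ∈ Finset.univ.filter (fun i => u i = 0), |x i|
        < ∑ i ∈ Finset.univ.filter (fun i => u i ≠ 0), Real.sign (u i) * x i) :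
    ∑ i, ∑ j, |x i * y j - u i * v j| = 0 := by
  classical
  -- column minimality
  have col_min : ∀ (j : Fin n) (t : ℝ),
      ∑ i, |x i * y j - u i * v j| ≤ ∑ i, |x i * t - u i * v j| := by
    intro j t
    have e2 : ∀ s : ℝ, ∑ i, Λ i j * (x i * s - u i * v j)
        = - ∑ i, Λ i j * (u i * v j) := by
      intro s
      calc ∑ i, Λ i j * (x i * s - u i * v j)
          = ∑ i, ((Λ i j * x i) * s - Λ i j * (u i * v j)) :=
            Finset.sum_congr rfl fun i _ => by ring
        _ = (∑ i, Λ i j * x i) * s - ∑ i, Λ i j * (u i * v j) := by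
            rw [Finset.sum_sub_distrib, Finset.sum_mul]
        _ = - ∑ i, Λ i j * (u i * v j) := by rw [hcol j]; ring
    calc ∑ i, |x i * y j - u i * v j|
        = ∑ i, Λ i j * (x i * y j - u i * v j) :=
          (Finset.sum_congr rfl fun i _ => signSet_mul (hΛ i j)).symm
      _ = - ∑ i, Λ i j * (u i * v j) := e2 (y j)
      _ = ∑ i, Λ i j * (x i * t - u i * v j) := (e2 t).symm
      _ ≤ ∑ i, |x i * t - u i * v j| :=
          Finset.sum_le_sum fun i _ => signSet_mul_le (hΛ i j) _
  -- row minimality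
  have row_min : ∀ (i : Fin m) (t : ℝ),
      ∑ j, |x i * y j - u i * v j| ≤ ∑ j, |t * y j - u i * v j| := by
    intro i t
    have e2 : ∀ s : ℝ, ∑ j, Λ i j * (s * y j - u i * v j)
        = - ∑ j, Λ i j * (u i * v j) := by
      intro s
      calc ∑ j, Λ i j * (s * y j - u i * v j)
          = ∑ j, ((Λ i j * y j) * s - Λ i j * (u i * v j)) :=
            Finset.sum_congr rfl fun j _ => by ring
        _ = (∑ j, Λ i j * y j) * s - ∑ j, Λ i j * (u i * v j) := by
            rw [Finset.sum_sub_distrib, Finset.sum_mul]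
        _ = - ∑ j, Λ i j * (u i * v j) := by rw [hrow i]; ring
    calc ∑ j, |x i * y j - u i * v j|
        = ∑ j, Λ i j * (x i * y j - u i * v j) :=
          (Finset.sum_congr rfl fun j _ => signSet_mul (hΛ i j)).symm
      _ = ∑ j, Λ i j * (x i * y j - u i * v j) := rfl
      _ = - ∑ j, Λ i j * (u i * v j) := by
          rw [← e2 (x i)]
      _ = ∑ j, Λ i j * (t * y j - u i * v j) := (e2 t).symm
      _ ≤ ∑ j, |t * y j - u i * v j| :=
          Finset.sum_le_sum fun j _ => signSet_mul_le (hΛ i j) _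
  obtain ⟨ε, hε0, hε⟩ := exists_eps m hm u x
  have hβε : ∑ i, |x i * ε - u i| < ∑ i, |u i| := beta_eps m u x ε hε0 hε hT
  have hβneg : ∀ r : ℝ, r ≤ 0 → ∑ i, |u i| ≤ ∑ i, |x i * r - u i| :=
    fun r hr => beta_neg m u x r hr hT.le
  -- v j ≠ 0 → y j v j > 0
  have hsj : ∀ j, v j ≠ 0 → 0 < y j * v j := by
    intro j hvj
    by_contra hyv
    push_neg at hyv
    have hr : y j / v j ≤ 0 := div_nonpos_iff.2 (mul_nonpos_iff.1 hyv)
    have hyr : y j = (y j / v j) * v j := (div_mul_cancel₀ (y j) hvj).symm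
    have h1 : ∑ i, |x i * y j - u i * v j| = |v j| * ∑ i, |x i * (y j / v j) - u i| := by
      rw [Finset.mul_sum]
      refine Finset.sum_congr rfl fun i _ => ?_
      rw [← abs_mul]
      congr 1
      field_simp
    have h2 : ∑ i, |x i * (ε * v j) - u i * v j| = |v j| * ∑ i, |x i * ε - u i| := by
      rw [Finset.mul_sum]
      refine Finset.sum_congr rfl fun i _ => ?_
      rw [← abs_mul]
      congr 1
      ring
    have h3 := col_min j (ε * v j)
    rw [h1, h2] at h3
    have hvpos : 0 < |v j| := abs_pos.2 hvj
    have h5 : ∑ i, |x i * (y j / v j) - u i| ≤ ∑ i, |x i * ε - u i| :=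
      le_of_mul_le_mul_left h3 hvpos
    have h6 := hβneg (y j / v j) hr
    linarith
  -- some x is nonzero
  have hXpos : 0 < ∑ i, |x i| := by
    have h1 : ∑ i ∈ Finset.univ.filter (fun i => u i ≠ 0), Real.sign (u i) * x i
        ≤ ∑ i ∈ Finset.univ.filter (fun i => u i ≠ 0), |x i| := by
      refine Finset.sum_le_sum fun i hi => ?_
      have hui : u i ≠ 0 := (Finset.mem_filter.1 hi).2
      calc Real.sign (u i) * x i ≤ |Real.sign (u i) * x i| := le_abs_self _
        _ = |Real.sign (u i)| * |x i| := abs_mul _ _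
        _ ≤ 1 * |x i| := by
            apply mul_le_mul_of_nonneg_right _ (abs_nonneg _)
            rcases hui.lt_or_gt with h | h
            · rw [Real.sign_of_neg h]; simp
            · rw [Real.sign_of_pos h]; simp
        _ = |x i| := one_mul _
    have h0 : 0 ≤ ∑ i ∈ Finset.univ.filter (fun i => u i = 0), |x i| :=
      Finset.sum_nonneg fun i _ => abs_nonneg _
    have h2 : ∑ i ∈ Finset.univ.filter (fun i => u i ≠ 0), |x i| ≤ ∑ i, |x i| :=
      Finset.sum_le_sum_of_subset_of_nonneg (Finset.filter_subset _ _)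
        (fun i _ _ => abs_nonneg _)
    linarith
  -- v j = 0 → y j = 0
  have hv0 : ∀ j, v j = 0 → y j = 0 := by
    intro j hvj
    have h := col_min j 0
    simp only [hvj, mul_zero, sub_zero, mul_zero, abs_zero, Finset.sum_const_zero] at h
    have h' : (∑ i, |x i|) * |y j| ≤ 0 := by
      rw [Finset.sum_mul]
      calc ∑ i, |x i| * |y j| = ∑ i, |x i * y j| :=
            Finset.sum_congr rfl fun i _ => (abs_mul _ _).symm
        _ ≤ 0 := h
    by_contra hy
    have : 0 < |y j| := abs_pos.2 hy
    nlinarith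
  by_cases hy : ∀ j, y j = 0
  · have hv : ∀ j, v j = 0 := by
      intro j
      by_contra hvj
      have := hsj j hvj
      rw [hy j] at this
      simp at this
    refine Finset.sum_eq_zero fun i _ => Finset.sum_eq_zero fun j _ => ?_
    simp [hy j, hv j]
  · push_neg at hy
    obtain ⟨j₀, hj₀⟩ := hy
    have hvj₀ : v j₀ ≠ 0 := fun h => hj₀ (hv0 j₀ h)
    have hYpos : 0 < ∑ j, |y j| :=
      Finset.sum_pos' (fun j _ => abs_nonneg _) ⟨j₀, Finset.mem_univ _, abs_pos.2 hj₀⟩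
    -- u i = 0 → x i = 0
    have hxu0 : ∀ i, u i = 0 → x i = 0 := by
      intro i hui
      have h := row_min i 0
      simp only [hui, zero_mul, sub_zero, mul_zero, zero_sub, abs_neg, abs_zero,
        Finset.sum_const_zero] at h
      have h' : |x i| * (∑ j, |y j|) ≤ 0 := by
        rw [Finset.mul_sum]
        calc ∑ j, |x i| * |y j| = ∑ j, |x i * y j| :=
              Finset.sum_congr rfl fun j _ => (abs_mul _ _).symm
          _ ≤ 0 := h
      by_contra hx
      have : 0 < |x i| := abs_pos.2 hx
      nlinarith
    -- y-side strict inequality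
    have hT' : ∑ j ∈ Finset.univ.filter (fun j => v j = 0), |y j|
        < ∑ j ∈ Finset.univ.filter (fun j => v j ≠ 0), Real.sign (v j) * y j := by
      have hL : ∑ j ∈ Finset.univ.filter (fun j => v j = 0), |y j| = 0 :=
        Finset.sum_eq_zero fun j hj => by
          rw [hv0 j (Finset.mem_filter.1 hj).2, abs_zero]
      rw [hL]
      refine Finset.sum_pos (fun j hj => ?_) ⟨j₀, Finset.mem_filter.2 ⟨Finset.mem_univ _, hvj₀⟩⟩
      have hvj : v j ≠ 0 := (Finset.mem_filter.1 hj).2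
      have hyv := hsj j hvj
      rcases hvj.lt_or_gt with h | h
      · rw [Real.sign_of_neg h]; nlinarith
      · rw [Real.sign_of_pos h]; nlinarith
    obtain ⟨ε', hε'0, hε'⟩ := exists_eps n hn v y
    have hαε : ∑ j, |y j * ε' - v j| < ∑ j, |v j| := beta_eps n v y ε' hε'0 hε' hT'
    have hαneg : ∀ r : ℝ, r ≤ 0 → ∑ j, |v j| ≤ ∑ j, |y j * r - v j| :=
      fun r hr => beta_neg n v y r hr hT'.le
    -- u i ≠ 0 → x i u i > 0
    have hti : ∀ i, u i ≠ 0 → 0 < x i * u i := by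
      intro i hui
      by_contra hxu
      push_neg at hxu
      have hr : x i / u i ≤ 0 := div_nonpos_iff.2 (mul_nonpos_iff.1 hxu)
      have hxr : x i = (x i / u i) * u i := (div_mul_cancel₀ (x i) hui).symm
      have h1 : ∑ j, |x i * y j - u i * v j| = |u i| * ∑ j, |y j * (x i / u i) - v j| := by
        rw [Finset.mul_sum]
        refine Finset.sum_congr rfl fun j _ => ?_
        rw [← abs_mul]
        congr 1
        field_simp
      have h2 : ∑ j, |(ε' * u i) * y j - u i * v j| = |u i| * ∑ j, |y j * ε' - v j| := by
        rw [Finset.mul_sum]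
        refine Finset.sum_congr rfl fun j _ => ?_
        rw [← abs_mul]
        congr 1
        ring
      have h3 := row_min i (ε' * u i)
      rw [h1, h2] at h3
      have hupos : 0 < |u i| := abs_pos.2 hui
      have h5 : ∑ j, |y j * (x i / u i) - v j| ≤ ∑ j, |y j * ε' - v j| :=
        le_of_mul_le_mul_left h3 hupos
      have h6 := hαneg (x i / u i) hr
      linarith
    -- the key nonnegativity + vanishing
    have hkey : ∀ i j, 0 ≤ Λ i j * (x i * y j) * (Real.log (x i / u i) + Real.log (y j / v j))
        ∧ (Λ i j * (x i * y j) * (Real.log (x i / u i) + Real.log (y j / v j)) = 0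
            → x i * y j - u i * v j = 0) := by
      intro i j
      by_cases hui : u i = 0
      · have hxi := hxu0 i hui
        constructor
        · simp [hxi]
        · intro _; simp [hxi, hui]
      by_cases hvj : v j = 0
      · have hyj := hv0 j hvj
        constructor
        · simp [hyj]
        · intro _; simp [hyj, hvj]
      · have hxu := hti i hui
        have hyv := hsj j hvj
        have ha : 0 < x i / u i := by
          rcases mul_pos_iff.1 hxu with ⟨h1, h2⟩ | ⟨h1, h2⟩
          · exact div_pos h1 h2
          · exact div_pos_of_neg_of_neg h1 h2
        have hb : 0 < y j / v j := by
          rcases mul_pos_iff.1 hyv with ⟨h1, h2⟩ | ⟨h1, h2⟩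
          · exact div_pos h1 h2
          · exact div_pos_of_neg_of_neg h1 h2
        have hw : u i * v j ≠ 0 := mul_ne_zero hui hvj
        have hLM : Real.log (x i / u i) + Real.log (y j / v j)
            = Real.log ((x i * y j) / (u i * v j)) := by
          rw [← Real.log_mul (ne_of_gt ha) (ne_of_gt hb), div_mul_div_comm]
        have hc : 0 < (x i * y j) / (u i * v j) := by
          rw [show (x i * y j) / (u i * v j) = (x i / u i) * (y j / v j) from
            (div_mul_div_comm _ _ _ _).symm]
          exact mul_pos ha hb
        have hxy : x i * y j = (u i * v j) * ((x i * y j) / (u i * v j)) :=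
          (mul_div_cancel₀ _ hw).symm
        have hsign : Λ i j ∈ signSet
            ((u i * v j) * ((x i * y j) / (u i * v j)) - (u i * v j)) := by
          rw [← hxy]; exact hΛ i j
        obtain ⟨hge, himp⟩ := sign_term (Λ i j) (u i * v j)
          ((x i * y j) / (u i * v j)) hw hc hsign
        constructor
        · rw [hLM]
          calc (0:ℝ) ≤ Λ i j * ((u i * v j) * ((x i * y j) / (u i * v j)))
              * Real.log ((x i * y j) / (u i * v j)) := hge
            _ = Λ i j * (x i * y j) * Real.log ((x i * y j) / (u i * v j)) := by
                rw [← hxy]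
        · intro h0
          rw [hLM] at h0
          have h0' : Λ i j * ((u i * v j) * ((x i * y j) / (u i * v j)))
              * Real.log ((x i * y j) / (u i * v j)) = 0 := by
            rw [← hxy]; exact h0
          have hc1 := himp h0'
          rw [hc1, mul_one] at hxy
          linarith
    -- key sum is zero
    have hK : ∑ i, ∑ j, Λ i j * (x i * y j)
        * (Real.log (x i / u i) + Real.log (y j / v j)) = 0 := by
      have e : ∀ i j, Λ i j * (x i * y j) * (Real.log (x i / u i) + Real.log (y j / v j))
          = (Real.log (x i / u i) * x i) * (Λ i j * y j)
            + (Real.log (y j / v j) * y j) * (Λ i j * x i) := fun i j => by ring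
      calc ∑ i, ∑ j, Λ i j * (x i * y j) * (Real.log (x i / u i) + Real.log (y j / v j))
          = ∑ i, ∑ j, ((Real.log (x i / u i) * x i) * (Λ i j * y j)
              + (Real.log (y j / v j) * y j) * (Λ i j * x i)) :=
            Finset.sum_congr rfl fun i _ => Finset.sum_congr rfl fun j _ => e i j
        _ = (∑ i, ∑ j, (Real.log (x i / u i) * x i) * (Λ i j * y j))
            + ∑ i, ∑ j, (Real.log (y j / v j) * y j) * (Λ i j * x i) := by
            rw [← Finset.sum_add_distrib]
            exact Finset.sum_congr rfl fun i _ => Finset.sum_add_distrib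
        _ = 0 + 0 := by
            congr 1
            · refine Finset.sum_eq_zero fun i _ => ?_
              rw [← Finset.mul_sum, hrow i, mul_zero]
            · rw [Finset.sum_comm]
              refine Finset.sum_eq_zero fun j _ => ?_
              rw [← Finset.mul_sum, hcol j, mul_zero]
        _ = 0 := by ring
    -- each term vanishes
    have hall : ∀ i j, Λ i j * (x i * y j)
        * (Real.log (x i / u i) + Real.log (y j / v j)) = 0 := by
      have h1 := (Finset.sum_eq_zero_iff_of_nonneg
        (fun i _ => Finset.sum_nonneg fun j _ => (hkey i j).1)).1 hK
      intro i j
      exact (Finset.sum_eq_zero_iff_of_nonneg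
        (fun j _ => (hkey i j).1)).1 (h1 i (Finset.mem_univ i)) j (Finset.mem_univ j)
    refine Finset.sum_eq_zero fun i _ => Finset.sum_eq_zero fun j _ => ?_
    rw [abs_eq_zero]
    exact (hkey i j).2 (hall i j)

lemma main_abs (m n : ℕ) (hm : 1 ≤ m) (hn : 1 ≤ n)
    (u x : Fin m → ℝ) (v y : Fin n → ℝ) (Λ : Matrix (Fin m) (Fin n) ℝ)
    (hΛ : ∀ i j, Λ i j ∈ signSet (x i * y j - u i * v j))
    (hrow : ∀ i, ∑ j, Λ i j * y j = 0) (hcol : ∀ j, ∑ i, Λ i j * x i = 0)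
    (hT : ∑ i ∈ Finset.univ.filter (fun i => u i = 0), |x i|
        < |∑ i ∈ Finset.univ.filter (fun i => u i ≠ 0), Real.sign (u i) * x i|) :
    ∑ i, ∑ j, |x i * y j - u i * v j| = 0 := by
  rcases lt_abs.1 hT with h | h
  · exact main_lt m n hm hn u x v y Λ hΛ hrow hcol h
  · have hΛ' : ∀ i j, Λ i j ∈ signSet ((-x i) * (-y j) - u i * v j) := by
      intro i j
      have := hΛ i j
      rwa [show (-x i) * (-y j) = x i * y j by ring]
    have hrow' : ∀ i, ∑ j, Λ i j * (-y j) = 0 := by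
      intro i
      simp only [mul_neg, Finset.sum_neg_distrib, hrow i, neg_zero]
    have hcol' : ∀ j, ∑ i, Λ i j * (-x i) = 0 := by
      intro j
      simp only [mul_neg, Finset.sum_neg_distrib, hcol j, neg_zero]
    have hT'' : ∑ i ∈ Finset.univ.filter (fun i => u i = 0), |-x i|
        < ∑ i ∈ Finset.univ.filter (fun i => u i ≠ 0), Real.sign (u i) * (-x i) := by
      have e1 : ∑ i ∈ Finset.univ.filter (fun i => u i = 0), |-x i|
          = ∑ i ∈ Finset.univ.filter (fun i => u i = 0), |x i| :=
        Finset.sum_congr rfl fun i _ => abs_neg _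
      have e2 : ∑ i ∈ Finset.univ.filter (fun i => u i ≠ 0), Real.sign (u i) * (-x i)
          = - ∑ i ∈ Finset.univ.filter (fun i => u i ≠ 0), Real.sign (u i) * x i := by
        rw [← Finset.sum_neg_distrib]
        exact Finset.sum_congr rfl fun i _ => by ring
      rw [e1, e2]
      linarith
    have hres := main_lt m n hm hn u (fun i => -x i) v (fun j => -y j) Λ hΛ' hrow' hcol' hT''
    calc ∑ i, ∑ j, |x i * y j - u i * v j|
        = ∑ i, ∑ j, |(-x i) * (-y j) - u i * v j| :=
          Finset.sum_congr rfl fun i _ => Finset.sum_congr rfl fun j _ => by ring_nf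
      _ = 0 := hres

/-- If `(x,y)` is a critical point of
`f(x,y) = Σᵢ Σⱼ |xᵢ yⱼ − uᵢ vⱼ|` (i.e. `0 ∈ ∂f(x,y)` in the Clarke sense), then either
`f(x,y) = 0`, or `|Σ_{uᵢ≠0} sgn(uᵢ) xᵢ| ≤ Σ_{uᵢ=0} |xᵢ|` and
`|Σ_{vⱼ≠0} sgn(vⱼ) yⱼ| ≤ Σ_{vⱼ=0} |yⱼ|` (that is, `0 ∈ ∂α(0) ∩ ∂β(0)`). -/
theorem critical_point_alternative (m n : ℕ) (hm : 1 ≤ m) (hn : 1 ≤ n)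
    (u x : Fin m → ℝ) (v y : Fin n → ℝ)
    (hcrit : ∃ Λ : Matrix (Fin m) (Fin n) ℝ,
      (∀ i j, Λ i j ∈ signSet (x i * y j - u i * v j)) ∧
      (∀ i, ∑ j, Λ i j * y j = 0) ∧ (∀ j, ∑ i, Λ i j * x i = 0)) :
    (∑ i, ∑ j, |x i * y j - u i * v j|) = 0 ∨
      (|∑ i ∈ Finset.univ.filter (fun i => u i ≠ 0), Real.sign (u i) * x i|
          ≤ ∑ i ∈ Finset.univ.filter (fun i => u i = 0), |x i| ∧
        |∑ j ∈ Finset.univ.filter (fun j => v j ≠ 0), Real.sign (v j) * y j|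
          ≤ ∑ j ∈ Finset.univ.filter (fun j => v j = 0), |y j|) := by
  obtain ⟨Λ, hΛ, hrow, hcol⟩ := hcrit
  by_cases hf : (∑ i, ∑ j, |x i * y j - u i * v j|) = 0
  · exact Or.inl hf
  · refine Or.inr ⟨?_, ?_⟩
    · by_contra hA
      push_neg at hA
      exact hf (main_abs m n hm hn u x v y Λ hΛ hrow hcol hA)
    · by_contra hB
      push_neg at hB
      have hΛ' : ∀ j i, (fun j i => Λ i j) j i ∈ signSet (y j * x i - v j * u i) := by
        intro j i
        have := hΛ i j
        rwa [mul_comm (x i) (y j), mul_comm (u i) (v j)] at this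
      have hres := main_abs n m hn hm v y u x (fun j i => Λ i j) hΛ'
        (fun j => hcol j) (fun i => hrow i) hB
      apply hf
      rw [Finset.sum_comm]
      calc ∑ j, ∑ i, |x i * y j - u i * v j|
          = ∑ j, ∑ i, |y j * x i - v j * u i| :=
            Finset.sum_congr rfl fun j _ => Finset.sum_congr rfl fun i _ => by
              rw [mul_comm (x i) (y j), mul_comm (u i) (v j)]
        _ = 0 := hres
end

section
/- A point (x,y) ∈ ℝ^m × ℝ^n is a critical point of f if and only if at least one of the following holds: (a) x_i y_j = u_i v_j for all i = 1,…,m and j = 1,…,n; or (b) |Σ_{i : u_i ≠ 0} sgn(u_i) x_i| ≤ Σ_{i : u_i = 0} |x_i| and y = 0; or (c) x = 0 and |Σ_{j : v_j ≠ 0} sgn(v_j) y_j| ≤ Σ_{j : v_j = 0} |y_j|; or (d) Σ_{i : u_i ≠ 0} sgn(u_i) x_i = 0, Σ_{j : v_j ≠ 0} sgn(v_j) y_j = 0, x_i y_j / (u_i v_j) ≤ 1 whenever u_i v_j ≠ 0, x_i = 0 whenever u_i = 0, and y_j = 0 whenever v_j = 0. -/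
/-
Where x and y are both nonzero, row i of `Λ y = 0` with `u i = 0` reads
`∑ j, |x i * y j| = x i * (Λ y) i = 0`, so x vanishes off the support of u, and y off that of v.
On the supports, put `x i = u i * a i` and `y j = v j * b j`; then `σ i j = sgn (u i v j) Λ i j`
lies in `sign (a i b j - 1)`, and the rows and columns of σ, weighted by `|v j| b j` and
`|u i| a i`, sum to zero. Since `sign` is a monotone operator,
`(a i - a i') ∑ j, |v j| b j (σ i j - σ i' j) = 0` is a sum of nonnegative terms, so rows with
different `a i` coincide. If a is not constant, σ has constant columns `τ j`, and the column
equations give `τ j * ∑ i, |u i| a i = 0`: either τ = 0, i.e. `x yᵀ = u vᵀ`, or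
`∑ i, sgn (u i) x i = 0`, and then `∑ i, |u i| |a i b j - 1| = -τ j ∑ i, |u i|` forces `τ j ≤ 0`,
i.e. `a i b j ≤ 1`. When y = 0 only the column equations remain; in a column with `v j ≠ 0` the
entries of rows with `u i = 0` are free in `[-1, 1]`, and they can cancel
`∑ i, sgn (u i) x i` exactly when its size is at most `∑ i, |x i|` over those rows.
-/

open scoped Classical

namespace Real

theorem sign_mul_self_eq_abs (r : ℝ) : sign r * r = |r| := by
  rcases lt_trichotomy r 0 with h | rfl | h
  · rw [sign_of_neg h, abs_of_neg h]; ring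
  · simp
  · rw [sign_of_pos h, abs_of_pos h, one_mul]

theorem abs_sign_le_one (r : ℝ) : |sign r| ≤ 1 := by
  rcases sign_apply_eq r with h | h | h <;> simp [h]

theorem sign_mul (r s : ℝ) : sign (r * s) = sign r * sign s := by
  rcases lt_trichotomy r 0 with hr | rfl | hr <;> rcases lt_trichotomy s 0 with hs | rfl | hs <;>
    simp [sign_of_neg, sign_of_pos, mul_pos_of_neg_of_neg, mul_neg_of_neg_of_pos,
      mul_neg_of_pos_of_neg, *]

theorem sign_mul_sign_self {r : ℝ} (hr : r ≠ 0) : sign r * sign r = 1 := by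
  rcases sign_apply_eq_of_ne_zero r hr with h | h <;> simp [h]

theorem abs_mul_div_self {r : ℝ} (hr : r ≠ 0) (s : ℝ) : |r| * (s / r) = sign r * s := by
  rw [← sign_mul_self_eq_abs]
  field_simp

end Real

open Real

theorem Fintype.sum_subtype_of_eq_zero {κ M : Type*} [Fintype κ] [AddCommMonoid M]
    {p : κ → Prop} [DecidablePred p] {f : κ → M} (hf : ∀ j, ¬p j → f j = 0) :
    ∑ j : Subtype p, f j = ∑ j, f j := by
  have := Fintype.sum_subtype_add_sum_subtype p f
  rwa [Finset.sum_eq_zero fun (j : {j // ¬p j}) _ => hf j j.2, add_zero] at this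

theorem sum_filter_ne_zero_sign_mul {ι : Type*} [Fintype ι] (u x : ι → ℝ) :
    ∑ i ∈ Finset.univ.filter (fun i => u i ≠ 0), sign (u i) * x i = ∑ i, sign (u i) * x i :=
  Finset.sum_filter_of_ne fun i _ h hu => h (by rw [hu, sign_zero, zero_mul])

theorem mem_signSet_iff {w l : ℝ} : l ∈ signSet w ↔ |l| ≤ 1 ∧ l * w = |w| := by
  unfold signSet
  rcases lt_trichotomy w 0 with hw | rfl | hw
  · rw [if_pos hw, abs_of_neg hw, Set.mem_singleton_iff]
    constructor
    · rintro rfl; norm_num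
    · rintro ⟨-, h⟩
      nlinarith
  · simp [abs_le]
  · rw [if_neg hw.not_gt, if_pos hw, abs_of_pos hw, Set.mem_singleton_iff]
    constructor
    · rintro rfl; norm_num
    · rintro ⟨-, h⟩
      nlinarith

theorem sign_mem_signSet (w : ℝ) : sign w ∈ signSet w :=
  mem_signSet_iff.2 ⟨abs_sign_le_one w, sign_mul_self_eq_abs w⟩

theorem eq_sign_of_mem_signSet {w l : ℝ} (hw : w ≠ 0) (h : l ∈ signSet w) : l = sign w :=
  mul_right_cancel₀ hw ((mem_signSet_iff.1 h).2.trans (sign_mul_self_eq_abs w).symm)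

theorem sign_mul_mem_signSet_mul {w l : ℝ} (c : ℝ) (h : l ∈ signSet w) :
    sign c * l ∈ signSet (c * w) := by
  rw [mem_signSet_iff] at h ⊢
  refine ⟨?_, ?_⟩
  · rw [abs_mul]
    nlinarith [abs_sign_le_one c, abs_nonneg l, abs_nonneg (sign c)]
  · rw [abs_mul, ← h.2, ← sign_mul_self_eq_abs]
    ring

theorem sign_mul_mem_signSet_of_mem_signSet_mul {c w l : ℝ} (hc : c ≠ 0)
    (h : l ∈ signSet (c * w)) : sign c * l ∈ signSet w := by
  simpa [inv_mul_cancel_left₀ hc] using sign_mul_mem_signSet_mul c⁻¹ h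

theorem sub_mul_sub_nonneg_of_mem_signSet {w w' l l' : ℝ} (h : l ∈ signSet w)
    (h' : l' ∈ signSet w') : 0 ≤ (w - w') * (l - l') := by
  rw [mem_signSet_iff] at h h'
  have hlw' : l * w' ≤ |w'| := (le_abs_self _).trans
    (by rw [abs_mul]; exact mul_le_of_le_one_left (abs_nonneg _) h.1)
  have hl'w : l' * w ≤ |w| := (le_abs_self _).trans
    (by rw [abs_mul]; exact mul_le_of_le_one_left (abs_nonneg _) h'.1)
  nlinarith [h.2, h'.2]

section RankOneResidual

variable {ι κ : Type*} [Fintype κ] {α a : ι → ℝ} {β b : κ → ℝ} {σ : ι → κ → ℝ}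

theorem eq_of_mem_signSet_of_ne (hβ : ∀ j, 0 < β j)
    (hσ : ∀ i j, σ i j ∈ signSet (a i * b j - 1)) (hrow : ∀ i, ∑ j, β j * b j * σ i j = 0)
    {i i' : ι} (hne : a i ≠ a i') (j : κ) : σ i j = σ i' j := by
  have hterm : ∀ j, 0 ≤ β j * ((a i - a i') * b j * (σ i j - σ i' j)) := fun j =>
    mul_nonneg (hβ j).le <| by
      simpa [← sub_mul] using sub_mul_sub_nonneg_of_mem_signSet (hσ i j) (hσ i' j)
  have hsum : ∑ j, β j * ((a i - a i') * b j * (σ i j - σ i' j)) = 0 := by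
    calc _ = (a i - a i') * (∑ j, β j * b j * σ i j - ∑ j, β j * b j * σ i' j) := by
          rw [← Finset.sum_sub_distrib, Finset.mul_sum]
          exact Finset.sum_congr rfl fun j _ => by ring
      _ = 0 := by rw [hrow, hrow, sub_self, mul_zero]
  have hj := (Finset.sum_eq_zero_iff_of_nonneg fun j _ => hterm j).1 hsum j (Finset.mem_univ j)
  rcases eq_or_ne (b j) 0 with hb | hb
  · have hneg : ∀ i, σ i j = -1 := fun i => by
      have := eq_sign_of_mem_signSet (w := -1) (by norm_num) (by simpa [hb] using hσ i j)
      rwa [sign_of_neg (by norm_num)] at this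
    rw [hneg, hneg]
  · simpa [(hβ j).ne', sub_ne_zero.2 hne, hb, sub_eq_zero] using hj

theorem eq_of_mem_signSet_of_exists_ne (hβ : ∀ j, 0 < β j)
    (hσ : ∀ i j, σ i j ∈ signSet (a i * b j - 1)) (hrow : ∀ i, ∑ j, β j * b j * σ i j = 0)
    {i₁ i₂ : ι} (hne : a i₁ ≠ a i₂) (i : ι) (j : κ) : σ i j = σ i₁ j := by
  by_cases hi : a i = a i₁
  · rw [eq_of_mem_signSet_of_ne hβ hσ hrow (hi ▸ hne) j,
      eq_of_mem_signSet_of_ne hβ hσ hrow hne j]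
  · exact eq_of_mem_signSet_of_ne hβ hσ hrow hi j

theorem eq_zero_of_sum_mul_eq_zero_of_mem_signSet [Fintype ι] [Nonempty ι] (hα : ∀ i, 0 < α i)
    {w : ℝ} {l : ι → ℝ} (hl : ∀ i, l i ∈ signSet w) (hsum : ∑ i, α i * l i = 0) : w = 0 := by
  have hαsum : 0 < ∑ i, α i := Finset.sum_pos (fun i _ => hα i) Finset.univ_nonempty
  have : |w| * ∑ i, α i = 0 := by
    calc _ = ∑ i, α i * (l i * w) := by
          rw [Finset.mul_sum]
          exact Finset.sum_congr rfl fun i _ => by rw [(mem_signSet_iff.1 (hl i)).2]; ring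
      _ = (∑ i, α i * l i) * w := by rw [Finset.sum_mul]; simp only [mul_assoc]
      _ = 0 := by rw [hsum, zero_mul]
  simpa [hαsum.ne'] using this

theorem forall_mul_eq_one_or_sum_eq_zero [Fintype ι] (hα : ∀ i, 0 < α i) (hβ : ∀ j, 0 < β j)
    (hσ : ∀ i j, σ i j ∈ signSet (a i * b j - 1)) (hrow : ∀ i, ∑ j, β j * b j * σ i j = 0)
    (hcol : ∀ j, ∑ i, α i * a i * σ i j = 0) (ha : a ≠ 0) :
    (∀ i j, a i * b j = 1) ∨ (∑ i, α i * a i = 0 ∧ ∀ i j, a i * b j ≤ 1) := by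
  obtain ⟨i₀, hi₀⟩ := Function.ne_iff.1 ha
  have : Nonempty ι := ⟨i₀⟩
  by_cases hconst : ∀ i, a i = a i₀
  · refine Or.inl fun i j => sub_eq_zero.1 ?_
    rw [hconst]
    refine eq_zero_of_sum_mul_eq_zero_of_mem_signSet hα (fun i => hconst i ▸ hσ i j) ?_
    have h := hcol j
    simp only [hconst, mul_right_comm _ (a i₀), ← Finset.sum_mul, mul_eq_zero] at h
    exact h.resolve_right hi₀
  push Not at hconst
  obtain ⟨i₁, hi₁⟩ := hconst
  have hrows := eq_of_mem_signSet_of_exists_ne hβ hσ hrow hi₁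
  have hcol' : ∀ j, (∑ i, α i * a i) * σ i₁ j = 0 := fun j => by
    simpa [hrows _ j, Finset.sum_mul] using hcol j
  by_cases hS : ∑ i, α i * a i = 0
  · refine Or.inr ⟨hS, fun i j => ?_⟩
    have hαsum : 0 < ∑ i, α i := Finset.sum_pos (fun i _ => hα i) Finset.univ_nonempty
    have hσ₀ : σ i₁ j ≤ 0 := by
      have : 0 ≤ -(σ i₁ j * ∑ i, α i) :=
        calc 0 ≤ ∑ i, α i * |a i * b j - 1| :=
              Finset.sum_nonneg fun i _ => mul_nonneg (hα i).le (abs_nonneg _)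
          _ = ∑ i, α i * (σ i₁ j * (a i * b j - 1)) :=
              Finset.sum_congr rfl fun i _ => by rw [← (mem_signSet_iff.1 (hσ i j)).2, hrows i j]
          _ = σ i₁ j * (b j * ∑ i, α i * a i) - σ i₁ j * ∑ i, α i := by
              simp only [Finset.mul_sum, ← Finset.sum_sub_distrib]
              exact Finset.sum_congr rfl fun i _ => by ring
          _ = -(σ i₁ j * ∑ i, α i) := by rw [hS]; ring
      nlinarith
    by_contra! hgt
    have := eq_sign_of_mem_signSet (by linarith) (hσ i j)
    rw [sign_of_pos (by linarith), hrows] at this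
    linarith
  · refine Or.inl fun i j => ?_
    have h0 : σ i j = 0 := (hrows i j).trans ((mul_eq_zero.1 (hcol' j)).resolve_left hS)
    have := (mem_signSet_iff.1 (hσ i j)).2
    rw [h0, zero_mul, eq_comm, abs_eq_zero, sub_eq_zero] at this
    exact this

theorem forall_mul_eq_one_or_balanced [Fintype ι] (hα : ∀ i, 0 < α i) (hβ : ∀ j, 0 < β j)
    (hσ : ∀ i j, σ i j ∈ signSet (a i * b j - 1)) (hrow : ∀ i, ∑ j, β j * b j * σ i j = 0)
    (hcol : ∀ j, ∑ i, α i * a i * σ i j = 0) (ha : a ≠ 0) (hb : b ≠ 0) :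
    (∀ i j, a i * b j = 1) ∨
      (∑ i, α i * a i = 0 ∧ ∑ j, β j * b j = 0 ∧ ∀ i j, a i * b j ≤ 1) := by
  obtain h | ⟨hsum_a, hle⟩ := forall_mul_eq_one_or_sum_eq_zero hα hβ hσ hrow hcol ha
  · exact Or.inl h
  have hσ' : ∀ j i, σ i j ∈ signSet (b j * a i - 1) := fun j i => mul_comm (a i) (b j) ▸ hσ i j
  obtain h | ⟨hsum_b, -⟩ := forall_mul_eq_one_or_sum_eq_zero hβ hα hσ' hcol hrow hb
  · exact Or.inl fun i j => mul_comm (a i) (b j) ▸ h j i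
  · exact Or.inr ⟨hsum_a, hsum_b, hle⟩

end RankOneResidual

theorem exists_sum_mul_eq_of_abs_le {ι : Type*} (s : Finset ι) (x : ι → ℝ) {t : ℝ}
    (ht : |t| ≤ ∑ i ∈ s, |x i|) : ∃ c : ι → ℝ, (∀ i, |c i| ≤ 1) ∧ ∑ i ∈ s, c i * x i = t := by
  rcases (Finset.sum_nonneg fun i _ => abs_nonneg (x i) : 0 ≤ ∑ i ∈ s, |x i|).eq_or_lt
    with hT | hT
  · exact ⟨0, by simp, by simp [abs_nonpos_iff.1 (hT ▸ ht)]⟩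
  refine ⟨fun i => t / (∑ i ∈ s, |x i|) * sign (x i), fun i => ?_, ?_⟩
  · rw [abs_mul, abs_div, abs_of_pos hT]
    exact mul_le_one₀ ((div_le_one hT).2 ht) (abs_nonneg _) (abs_sign_le_one _)
  · simp only [mul_assoc, ← Finset.mul_sum, sign_mul_self_eq_abs]
    field_simp

theorem exists_mem_signSet_sum_mul_eq_zero_iff {ι : Type*} [Fintype ι] {u x : ι → ℝ} :
    (∃ μ : ι → ℝ, (∀ i, μ i ∈ signSet (u i)) ∧ ∑ i, μ i * x i = 0) ↔
      |∑ i ∈ Finset.univ.filter (fun i => u i ≠ 0), sign (u i) * x i| ≤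
        ∑ i ∈ Finset.univ.filter (fun i => u i = 0), |x i| := by
  constructor
  · rintro ⟨μ, hμ, hsum⟩
    rw [← Finset.sum_filter_add_sum_filter_not _ (fun i => u i = 0)] at hsum
    have hsign : ∑ i ∈ Finset.univ.filter (fun i => ¬u i = 0), μ i * x i =
        ∑ i ∈ Finset.univ.filter (fun i => u i ≠ 0), sign (u i) * x i :=
      Finset.sum_congr rfl fun i hi => by
        rw [eq_sign_of_mem_signSet (Finset.mem_filter.1 hi).2 (hμ i)]
    rw [hsign] at hsum
    calc _ = |∑ i ∈ Finset.univ.filter (fun i => u i = 0), μ i * x i| := by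
          rw [eq_neg_of_add_eq_zero_right hsum, abs_neg]
      _ ≤ ∑ i ∈ Finset.univ.filter (fun i => u i = 0), |μ i * x i| :=
          Finset.abs_sum_le_sum_abs _ _
      _ ≤ _ := Finset.sum_le_sum fun i _ => by
          rw [abs_mul]
          exact mul_le_of_le_one_left (abs_nonneg _) (mem_signSet_iff.1 (hμ i)).1
  · intro h
    obtain ⟨c, hc, hcsum⟩ := exists_sum_mul_eq_of_abs_le _ x
      (t := -∑ i ∈ Finset.univ.filter (fun i => u i ≠ 0), sign (u i) * x i) (by rwa [abs_neg])
    refine ⟨fun i => if u i = 0 then c i else sign (u i), fun i => ?_, ?_⟩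
    · dsimp only
      split_ifs with hu
      · rw [hu, mem_signSet_iff]
        simpa using hc i
      · exact sign_mem_signSet _
    rw [← Finset.sum_filter_add_sum_filter_not _ (fun i => u i = 0)]
    have hzero : ∑ i ∈ Finset.univ.filter (fun i => u i = 0),
        (if u i = 0 then c i else sign (u i)) * x i =
          ∑ i ∈ Finset.univ.filter (fun i => u i = 0), c i * x i :=
      Finset.sum_congr rfl fun i hi => by rw [if_pos (Finset.mem_filter.1 hi).2]
    have hsign : ∑ i ∈ Finset.univ.filter (fun i => ¬u i = 0),
        (if u i = 0 then c i else sign (u i)) * x i =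
          ∑ i ∈ Finset.univ.filter (fun i => u i ≠ 0), sign (u i) * x i :=
      Finset.sum_congr rfl fun i hi => by rw [if_neg (Finset.mem_filter.1 hi).2]
    rw [hzero, hsign, hcsum, neg_add_cancel]

section CriticalPoint

variable {ι κ : Type*} [Fintype ι] [Fintype κ] {u x : ι → ℝ} {v y : κ → ℝ}

variable (u x v y) in
def IsCriticalPoint : Prop :=
  ∃ Λ : Matrix ι κ ℝ, (∀ i j, Λ i j ∈ signSet (x i * y j - u i * v j)) ∧
    (∀ i, ∑ j, Λ i j * y j = 0) ∧ (∀ j, ∑ i, Λ i j * x i = 0)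

-- Condition (d) of the characterization.
variable (u x v y) in
def IsBalancedPoint : Prop :=
  (∑ i ∈ Finset.univ.filter (fun i => u i ≠ 0), sign (u i) * x i) = 0 ∧
    (∑ j ∈ Finset.univ.filter (fun j => v j ≠ 0), sign (v j) * y j) = 0 ∧
    (∀ i j, u i * v j ≠ 0 → x i * y j / (u i * v j) ≤ 1) ∧
    (∀ i, u i = 0 → x i = 0) ∧ (∀ j, v j = 0 → y j = 0)

theorem IsCriticalPoint.swap (h : IsCriticalPoint u x v y) : IsCriticalPoint v y u x := by
  obtain ⟨Λ, hΛ, hrow, hcol⟩ := h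
  refine ⟨fun j i => Λ i j, fun j i => ?_, hcol, hrow⟩
  simpa only [mul_comm] using hΛ i j

theorem IsCriticalPoint.eq_zero_of_eq_zero (h : IsCriticalPoint u x v y) (hy : y ≠ 0) {i : ι}
    (hu : u i = 0) : x i = 0 := by
  obtain ⟨Λ, hΛ, hrow, -⟩ := h
  have hsum : ∑ j, |x i * y j| = 0 :=
    calc _ = x i * ∑ j, Λ i j * y j := by
          rw [Finset.mul_sum]
          refine Finset.sum_congr rfl fun j _ => ?_
          have := (mem_signSet_iff.1 (hΛ i j)).2
          rw [hu, zero_mul, sub_zero] at this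
          rw [← this]
          ring
      _ = 0 := by rw [hrow, mul_zero]
  obtain ⟨j, hj⟩ := Function.ne_iff.1 hy
  have := (Finset.sum_eq_zero_iff_of_nonneg fun j _ => abs_nonneg _).1 hsum j (Finset.mem_univ j)
  exact (mul_eq_zero.1 (abs_eq_zero.1 this)).resolve_right hj

theorem IsCriticalPoint.forall_eq_or_balanced_of_ne_zero (h : IsCriticalPoint u x v y)
    (hu : ∀ i, u i ≠ 0) (hv : ∀ j, v j ≠ 0) (hx : x ≠ 0) (hy : y ≠ 0) :
    (∀ i j, x i * y j = u i * v j) ∨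
      (∑ i, sign (u i) * x i = 0 ∧ ∑ j, sign (v j) * y j = 0 ∧
        ∀ i j, x i * y j / (u i * v j) ≤ 1) := by
  obtain ⟨Λ, hΛ, hrow, hcol⟩ := h
  have hσ : ∀ i j, sign (u i) * sign (v j) * Λ i j ∈
      signSet (x i / u i * (y j / v j) - 1) := fun i j => by
    rw [← Real.sign_mul]
    refine sign_mul_mem_signSet_of_mem_signSet_mul (mul_ne_zero (hu i) (hv j)) ?_
    convert hΛ i j using 2
    field_simp [hu i, hv j]
  have hrow' : ∀ i, ∑ j, |v j| * (y j / v j) * (sign (u i) * sign (v j) * Λ i j) = 0 :=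
    fun i => by
      calc _ = sign (u i) * ∑ j, Λ i j * y j := by
            rw [Finset.mul_sum]
            refine Finset.sum_congr rfl fun j _ => ?_
            rw [abs_mul_div_self (hv j)]
            linear_combination (sign (u i) * Λ i j * y j) * sign_mul_sign_self (hv j)
        _ = 0 := by rw [hrow, mul_zero]
  have hcol' : ∀ j, ∑ i, |u i| * (x i / u i) * (sign (u i) * sign (v j) * Λ i j) = 0 :=
    fun j => by
      calc _ = sign (v j) * ∑ i, Λ i j * x i := by
            rw [Finset.mul_sum]
            refine Finset.sum_congr rfl fun i _ => ?_
            rw [abs_mul_div_self (hu i)]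
            linear_combination (sign (v j) * Λ i j * x i) * sign_mul_sign_self (hu i)
        _ = 0 := by rw [hcol, mul_zero]
  have ha : (fun i => x i / u i) ≠ 0 := by
    obtain ⟨i, hi⟩ := Function.ne_iff.1 hx
    exact Function.ne_iff.2 ⟨i, div_ne_zero hi (hu i)⟩
  have hb : (fun j => y j / v j) ≠ 0 := by
    obtain ⟨j, hj⟩ := Function.ne_iff.1 hy
    exact Function.ne_iff.2 ⟨j, div_ne_zero hj (hv j)⟩
  obtain h | ⟨hsum_a, hsum_b, hle⟩ := forall_mul_eq_one_or_balanced (fun i => abs_pos.2 (hu i))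
    (fun j => abs_pos.2 (hv j)) hσ hrow' hcol' ha hb
  · refine Or.inl fun i j => ?_
    have := h i j
    field_simp [hu i, hv j] at this
    exact this
  · refine Or.inr ⟨?_, ?_, fun i j => ?_⟩
    · simpa only [abs_mul_div_self (hu _)] using hsum_a
    · simpa only [abs_mul_div_self (hv _)] using hsum_b
    · simpa only [div_mul_div_comm] using hle i j

theorem IsCriticalPoint.restrict (h : IsCriticalPoint u x v y) (hx : ∀ i, u i = 0 → x i = 0)
    (hy : ∀ j, v j = 0 → y j = 0) :
    IsCriticalPoint (fun i : {i // u i ≠ 0} => u i) (fun i => x i)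
      (fun j : {j // v j ≠ 0} => v j) (fun j => y j) := by
  obtain ⟨Λ, hΛ, hrow, hcol⟩ := h
  refine ⟨fun i j => Λ i j, fun i j => hΛ i j, fun i => ?_, fun j => ?_⟩
  · rw [Fintype.sum_subtype_of_eq_zero (f := fun j => Λ i j * y j)
      fun j hj => by rw [hy j (not_not.1 hj), mul_zero], hrow]
  · rw [Fintype.sum_subtype_of_eq_zero (f := fun i => Λ i j * x i)
      fun i hi => by rw [hx i (not_not.1 hi), mul_zero], hcol]

theorem IsCriticalPoint.forall_eq_or_isBalancedPoint (h : IsCriticalPoint u x v y) (hx : x ≠ 0)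
    (hy : y ≠ 0) : (∀ i j, x i * y j = u i * v j) ∨ IsBalancedPoint u x v y := by
  have hx0 : ∀ i, u i = 0 → x i = 0 := fun i => h.eq_zero_of_eq_zero hy
  have hy0 : ∀ j, v j = 0 → y j = 0 := fun j => h.swap.eq_zero_of_eq_zero hx
  have hx' : (fun i : {i // u i ≠ 0} => x i) ≠ 0 := by
    obtain ⟨i, hi⟩ := Function.ne_iff.1 hx
    exact Function.ne_iff.2 ⟨⟨i, mt (hx0 i) hi⟩, hi⟩
  have hy' : (fun j : {j // v j ≠ 0} => y j) ≠ 0 := by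
    obtain ⟨j, hj⟩ := Function.ne_iff.1 hy
    exact Function.ne_iff.2 ⟨⟨j, mt (hy0 j) hj⟩, hj⟩
  obtain h' | ⟨hsum_x, hsum_y, hle⟩ := (h.restrict hx0 hy0).forall_eq_or_balanced_of_ne_zero
    (fun i => i.2) (fun j => j.2) hx' hy'
  · refine Or.inl fun i j => ?_
    by_cases hu : u i = 0
    · rw [hu, hx0 i hu, zero_mul, zero_mul]
    by_cases hv : v j = 0
    · rw [hv, hy0 j hv, mul_zero, mul_zero]
    exact h' ⟨i, hu⟩ ⟨j, hv⟩
  refine Or.inr ⟨?_, ?_, fun i j huv => hle ⟨i, left_ne_zero_of_mul huv⟩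
    ⟨j, right_ne_zero_of_mul huv⟩, hx0, hy0⟩
  · rwa [sum_filter_ne_zero_sign_mul, ← Fintype.sum_subtype_of_eq_zero (p := fun i => u i ≠ 0)
      fun i hi => by rw [not_not.1 hi, sign_zero, zero_mul]]
  · rwa [sum_filter_ne_zero_sign_mul, ← Fintype.sum_subtype_of_eq_zero (p := fun j => v j ≠ 0)
      fun j hj => by rw [not_not.1 hj, sign_zero, zero_mul]]

theorem isCriticalPoint_zero_right_iff : IsCriticalPoint u x v 0 ↔
    v = 0 ∨ ∃ μ : ι → ℝ, (∀ i, μ i ∈ signSet (u i)) ∧ ∑ i, μ i * x i = 0 := by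
  constructor
  · rintro ⟨Λ, hΛ, -, hcol⟩
    by_cases hv : v = 0
    · exact Or.inl hv
    obtain ⟨j, hj⟩ := Function.ne_iff.1 hv
    refine Or.inr ⟨fun i => sign (-v j) * Λ i j, fun i => ?_, ?_⟩
    · refine sign_mul_mem_signSet_of_mem_signSet_mul (neg_ne_zero.2 hj) ?_
      simpa [mul_comm] using hΛ i j
    · simp only [mul_assoc, ← Finset.mul_sum, hcol, mul_zero]
  · rintro (rfl | ⟨μ, hμ, hsum⟩)
    · exact ⟨0, fun i j => by simp [mem_signSet_iff], by simp, by simp⟩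
    · refine ⟨fun i j => sign (-v j) * μ i, fun i j => ?_, by simp, fun j => ?_⟩
      · simpa [mul_comm] using sign_mul_mem_signSet_mul (-v j) (hμ i)
      · simp only [mul_assoc, ← Finset.mul_sum, hsum, mul_zero]

theorem IsBalancedPoint.isCriticalPoint (h : IsBalancedPoint u x v y) :
    IsCriticalPoint u x v y := by
  obtain ⟨hsum_x, hsum_y, hle, hx0, hy0⟩ := h
  refine ⟨fun i j => -(sign (u i) * sign (v j)), fun i j => mem_signSet_iff.2 ⟨?_, ?_⟩,
    fun i => ?_, fun j => ?_⟩
  · rw [abs_neg, abs_mul]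
    exact mul_le_one₀ (abs_sign_le_one _) (abs_nonneg _) (abs_sign_le_one _)
  · by_cases huv : u i * v j = 0
    · have hxy : x i * y j = 0 := by
        rcases mul_eq_zero.1 huv with hu | hv
        · rw [hx0 i hu, zero_mul]
        · rw [hy0 j hv, mul_zero]
      simp [hxy, huv]
    · have hdiff : x i * y j - u i * v j = u i * v j * (x i * y j / (u i * v j) - 1) := by
        rw [mul_sub, mul_one, mul_div_cancel₀ _ huv]
      dsimp only
      rw [hdiff, ← Real.sign_mul, abs_mul, abs_of_nonpos (sub_nonpos.2 (hle i j huv)),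
        ← sign_mul_self_eq_abs]
      ring
  · simp only [neg_mul, mul_assoc, ← Finset.mul_sum, Finset.sum_neg_distrib,
      ← sum_filter_ne_zero_sign_mul, hsum_y, mul_zero, neg_zero]
  · simp only [neg_mul, Finset.sum_neg_distrib, mul_right_comm _ (sign (v j)), ← Finset.sum_mul,
      ← sum_filter_ne_zero_sign_mul, hsum_x, zero_mul, neg_zero]

end CriticalPoint

theorem critical_point_characterization_general (m n : ℕ)
    (u x : Fin m → ℝ) (v y : Fin n → ℝ) :
    (∃ Λ : Matrix (Fin m) (Fin n) ℝ,
      (∀ i j, Λ i j ∈ signSet (x i * y j - u i * v j)) ∧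
      (∀ i, ∑ j, Λ i j * y j = 0) ∧ (∀ j, ∑ i, Λ i j * x i = 0))
    ↔
    ((∀ i j, x i * y j = u i * v j) ∨
      (|∑ i ∈ Finset.univ.filter (fun i => u i ≠ 0), Real.sign (u i) * x i|
          ≤ (∑ i ∈ Finset.univ.filter (fun i => u i = 0), |x i|) ∧ y = 0) ∨
      (x = 0 ∧
        |∑ j ∈ Finset.univ.filter (fun j => v j ≠ 0), Real.sign (v j) * y j|
          ≤ ∑ j ∈ Finset.univ.filter (fun j => v j = 0), |y j|) ∨
      ((∑ i ∈ Finset.univ.filter (fun i => u i ≠ 0), Real.sign (u i) * x i) = 0 ∧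
        (∑ j ∈ Finset.univ.filter (fun j => v j ≠ 0), Real.sign (v j) * y j) = 0 ∧
        (∀ i j, u i * v j ≠ 0 → x i * y j / (u i * v j) ≤ 1) ∧
        (∀ i, u i = 0 → x i = 0) ∧ (∀ j, v j = 0 → y j = 0))) := by
  change IsCriticalPoint u x v y ↔ _ ∨ _ ∨ _ ∨ IsBalancedPoint u x v y
  constructor
  · intro h
    by_cases hy : y = 0
    · subst hy
      obtain rfl | hμ := isCriticalPoint_zero_right_iff.1 h
      · exact Or.inl fun i j => by simp
      · exact Or.inr (Or.inl ⟨exists_mem_signSet_sum_mul_eq_zero_iff.1 hμ, rfl⟩)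
    by_cases hx : x = 0
    · subst hx
      obtain rfl | hμ := isCriticalPoint_zero_right_iff.1 h.swap
      · exact Or.inl fun i j => by simp
      · exact Or.inr (Or.inr (Or.inl ⟨rfl, exists_mem_signSet_sum_mul_eq_zero_iff.1 hμ⟩))
    obtain h' | h' := h.forall_eq_or_isBalancedPoint hx hy
    · exact Or.inl h'
    · exact Or.inr (Or.inr (Or.inr h'))
  · rintro (h | ⟨h, rfl⟩ | ⟨rfl, h⟩ | h)
    · exact ⟨0, fun i j => by simp [h i j, mem_signSet_iff], by simp, by simp⟩
    · exact isCriticalPoint_zero_right_iff.2 (Or.inr (exists_mem_signSet_sum_mul_eq_zero_iff.2 h))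
    · exact (isCriticalPoint_zero_right_iff.2
        (Or.inr (exists_mem_signSet_sum_mul_eq_zero_iff.2 h))).swap
    · exact h.isCriticalPoint

/-- `(x,y)` is a critical point of `f(x,y) = Σᵢ Σⱼ |xᵢ yⱼ − uᵢ vⱼ|` if and
only if one of the four conditions (a)-(d) of Lemma 2 holds. -/
theorem critical_point_characterization (m n : ℕ) (hm : 1 ≤ m) (hn : 1 ≤ n)
    (u x : Fin m → ℝ) (v y : Fin n → ℝ) :
    (∃ Λ : Matrix (Fin m) (Fin n) ℝ,
      (∀ i j, Λ i j ∈ signSet (x i * y j - u i * v j)) ∧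
      (∀ i, ∑ j, Λ i j * y j = 0) ∧ (∀ j, ∑ i, Λ i j * x i = 0))
    ↔
    ((∀ i j, x i * y j = u i * v j) ∨
      (|∑ i ∈ Finset.univ.filter (fun i => u i ≠ 0), Real.sign (u i) * x i|
          ≤ (∑ i ∈ Finset.univ.filter (fun i => u i = 0), |x i|) ∧ y = 0) ∨
      (x = 0 ∧
        |∑ j ∈ Finset.univ.filter (fun j => v j ≠ 0), Real.sign (v j) * y j|
          ≤ ∑ j ∈ Finset.univ.filter (fun j => v j = 0), |y j|) ∨
      ((∑ i ∈ Finset.univ.filter (fun i => u i ≠ 0), Real.sign (u i) * x i) = 0 ∧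
        (∑ j ∈ Finset.univ.filter (fun j => v j ≠ 0), Real.sign (v j) * y j) = 0 ∧
        (∀ i j, u i * v j ≠ 0 → x i * y j / (u i * v j) ≤ 1) ∧
        (∀ i, u i = 0 → x i = 0) ∧ (∀ j, v j = 0 → y j = 0))) :=
  critical_point_characterization_general m n u x v y
end
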